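/- arXiv:2605.27669 — 11 statements merged into one kernel-verified Lean document; each statement's English description precedes it below -/
import Mathlib

section
/- Let f : ℂ → ℂ be holomorphic on ℂ∖{0} with f(z) ≠ 0 for every z ≠ 0. Then there exist a unique integer n ∈ ℤ and a function H : ℂ → ℂ holomorphic on ℂ∖{0} such that f(z) = z^n · exp(H(z)) for all z ≠ 0 (where z^n denotes the integer power, i.e. zpow). -/
/-!
Pull `f` back along the covering `exp : ℂ → ℂ∖{0}`. The entire function `f ∘ exp` never vanishes,
so it has a holomorphic logarithm `L` (a primitive of its logarithmic derivative). Since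
`f ∘ exp` is `2πi`-periodic, `w ↦ L (w + 2πi) - L w` is a continuous choice of values in `2πiℤ`,
hence a constant `2πin`; then `L w - n w` is `2πi`-periodic and descends along `exp` to the
required `H`. Uniqueness runs the same argument backwards: if `z ^ k = exp (E z)` on `ℂ∖{0}`, then
`k w - E (exp w)` is a constant, which forces `k · 2πi = 0`.
-/

open Complex Function
open scoped Real

theorem Differentiable.exists_cexp_eq {F : ℂ → ℂ} (hF : Differentiable ℂ F)
    (hF₀ : ∀ z, F z ≠ 0) : ∃ L : ℂ → ℂ, Differentiable ℂ L ∧ ∀ z, cexp (L z) = F z := by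
  obtain ⟨L, hL₀, hL⟩ := (hF.deriv.div hF hF₀).isExactOn_univ.with_val_at 0 (Complex.log (F 0))
  have hL' : ∀ z, HasDerivAt L (_root_.deriv F z / F z) z := fun z => hL z (Set.mem_univ z)
  have hquot : ∀ z, HasDerivAt (fun w => cexp (L w) / F w) 0 z := by
    intro z
    refine ((hL' z).cexp.fun_div (hF z).hasDerivAt (hF₀ z)).congr_deriv ?_
    rw [mul_assoc, div_mul_cancel₀ _ (hF₀ z), sub_self, zero_div]
  refine ⟨L, fun z => (hL' z).differentiableAt, fun z => ?_⟩
  have hconst := is_const_of_deriv_eq_zero (fun w => (hquot w).differentiableAt)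
    (fun w => (hquot w).deriv) z 0
  rwa [hL₀, exp_log (hF₀ 0), div_self (hF₀ 0), div_eq_one_iff_eq (hF₀ z)] at hconst

theorem Differentiable.apply_eq_of_cexp_comp_eq_const {φ : ℂ → ℂ} (hφ : Differentiable ℂ φ)
    {c : ℂ} (h : ∀ z, cexp (φ z) = c) (z w : ℂ) : φ z = φ w := by
  have hderiv : ∀ z, _root_.deriv φ z = 0 := by
    intro z
    have hconst : HasDerivAt (fun z => cexp (φ z)) 0 z := by
      simpa only [h] using hasDerivAt_const z c
    exact (mul_eq_zero.mp ((hφ z).hasDerivAt.cexp.unique hconst)).resolve_left (exp_ne_zero _)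
  exact is_const_of_deriv_eq_zero hφ hderiv z w

theorem Function.Periodic.exists_comp_cexp_eq {M : ℂ → ℂ} (hM : Differentiable ℂ M)
    (hper : Periodic M (2 * π * I)) :
    ∃ H : ℂ → ℂ, (∀ z, z ≠ 0 → DifferentiableAt ℂ H z) ∧ ∀ w, H (cexp w) = M w := by
  have hN : Periodic (fun z => M (I * z)) (2 * π : ℝ) := fun z => by
    simpa [mul_add, mul_comm, mul_left_comm] using hper (I * z)
  -- `cuspFunction h` descends `h`-periodic functions along `qParam h z = exp (2πiz / h)`.
  have hq : ∀ w, qParam (2 * π) (-I * w) = cexp w := fun w => by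
    rw [qParam]
    congr 1
    push_cast
    field_simp
    ring_nf
    simp
  have h2π : (2 * π : ℝ) ≠ 0 := by positivity
  refine ⟨cuspFunction (2 * π) (fun z => M (I * z)), fun z hz => ?_, fun w => ?_⟩
  · rw [← exp_log hz, ← hq]
    exact differentiableAt_cuspFunction h2π hN ((hM _).comp _ (differentiableAt_id.const_mul I))
  · rw [← hq, eq_cuspFunction h2π hN]
    simp [← mul_assoc]

theorem eq_of_zpow_mul_cexp_eq {m n : ℤ} {G H : ℂ → ℂ}
    (hG : ∀ z, z ≠ 0 → DifferentiableAt ℂ G z) (hH : ∀ z, z ≠ 0 → DifferentiableAt ℂ H z)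
    (h : ∀ z, z ≠ 0 → z ^ m * cexp (G z) = z ^ n * cexp (H z)) : m = n := by
  set φ : ℂ → ℂ := fun w => (m - n : ℤ) * w + G (cexp w) - H (cexp w)
  have hφ : Differentiable ℂ φ := fun w =>
    ((differentiableAt_id.const_mul _).add
      ((hG _ (exp_ne_zero w)).comp w differentiableAt_exp)).sub
      ((hH _ (exp_ne_zero w)).comp w differentiableAt_exp)
  have hφ_exp : ∀ w, cexp (φ w) = 1 := fun w => by
    have hw := exp_ne_zero w
    rw [exp_sub, exp_add, exp_int_mul, zpow_sub₀ hw, div_eq_one_iff_eq (exp_ne_zero _),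
      div_mul_eq_mul_div, div_eq_iff (zpow_ne_zero _ hw), mul_comm _ (cexp w ^ n)]
    exact h _ hw
  have hφ_period := hφ.apply_eq_of_cexp_comp_eq_const hφ_exp (2 * π * I) 0
  simpa [φ, exp_two_pi_mul_I, sub_eq_zero, two_pi_I_ne_zero] using hφ_period

/-- a nowhere-vanishing holomorphic function on `ℂ∖{0}` has the form
`z^n · exp(H z)` for a unique integer `n` and some holomorphic `H` on `ℂ∖{0}`. -/
theorem stmt_1 (f : ℂ → ℂ)
    (hf : ∀ z : ℂ, z ≠ 0 → DifferentiableAt ℂ f z)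
    (hnz : ∀ z : ℂ, z ≠ 0 → f z ≠ 0) :
    ∃! n : ℤ, ∃ H : ℂ → ℂ,
      (∀ z : ℂ, z ≠ 0 → DifferentiableAt ℂ H z) ∧
      ∀ z : ℂ, z ≠ 0 → f z = z ^ n * Complex.exp (H z) := by
  have hF : Differentiable ℂ (fun w => f (cexp w)) := fun w =>
    (hf _ (exp_ne_zero w)).comp w differentiableAt_exp
  obtain ⟨L, hL, hLf⟩ := hF.exists_cexp_eq fun w => hnz _ (exp_ne_zero w)
  obtain ⟨n, hn⟩ : ∃ n : ℤ, L (2 * π * I) - L 0 = n * (2 * π * I) := by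
    rw [← exp_eq_one_iff, exp_sub, hLf, hLf, exp_two_pi_mul_I, exp_zero,
      div_self (hnz 1 one_ne_zero)]
  have hper : Periodic (fun w => L w - n * w) (2 * π * I) := fun w => by
    have hshift : ∀ w, cexp (L (w + 2 * π * I) - L w) = 1 := fun w => by
      rw [exp_sub, hLf, hLf, exp_add, exp_two_pi_mul_I, mul_one, div_self (hnz _ (exp_ne_zero w))]
    have hdiff : Differentiable ℂ fun w => L (w + 2 * π * I) - L w := by fun_prop
    have hconst := hdiff.apply_eq_of_cexp_comp_eq_const hshift w 0
    rw [zero_add] at hconst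
    linear_combination hconst + hn
  obtain ⟨H, hH, hHL⟩ := hper.exists_comp_cexp_eq (by fun_prop)
  have hfH : ∀ z, z ≠ 0 → f z = z ^ n * cexp (H z) := fun z hz => by
    obtain ⟨w, rfl⟩ : ∃ w, cexp w = z := ⟨log z, exp_log hz⟩
    rw [← hLf, hHL, exp_sub, ← exp_int_mul, mul_div_cancel₀ _ (exp_ne_zero _)]
  refine ⟨n, ⟨H, hH, hfH⟩, fun m ⟨G, hG, hfG⟩ => ?_⟩
  exact eq_of_zpow_mul_cexp_eq hG hH fun z hz => by rw [← hfG z hz, ← hfH z hz]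
end

section
/- Let f : ℂ → ℂ be holomorphic on ℂ∖{0} with f(z) ≠ 0 for z ≠ 0, and suppose there exists g : ℂ → ℂ holomorphic on ℂ∖{0} with g(z) ≠ 0 for z ≠ 0 such that g(f(z)) = z and f(g(z)) = z for all z ≠ 0 (i.e. f is a biholomorphic self-map of ℂ∖{0}). Then there exists a ∈ ℂ with a ≠ 0 such that either f(z) = a·z for all z ≠ 0, or f(z) = a/z for all z ≠ 0. Conversely, every map of either of these two forms is such a biholomorphism of ℂ∖{0}. -/
/-- A biholomorphic self-map of `ℂ∖{0}`: holomorphic, nonvanishing, with a holomorphic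
nonvanishing two-sided inverse on `ℂ∖{0}`. -/
def IsBiholoCStar (f : ℂ → ℂ) : Prop :=
  (∀ z : ℂ, z ≠ 0 → DifferentiableAt ℂ f z) ∧
  (∀ z : ℂ, z ≠ 0 → f z ≠ 0) ∧
  ∃ g : ℂ → ℂ,
    (∀ z : ℂ, z ≠ 0 → DifferentiableAt ℂ g z) ∧
    (∀ z : ℂ, z ≠ 0 → g z ≠ 0) ∧
    (∀ z : ℂ, z ≠ 0 → g (f z) = z) ∧
    (∀ z : ℂ, z ≠ 0 → f (g z) = z)

/-!
Since its inverse is continuous, a biholomorphism `f` of `ℂ∖{0}` maps a small punctured disc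
around `0` off any given compact annulus; punctured discs being connected, `f` tends either to
`0` or to `∞` at `0`, and replacing `f` by `1/f` we may assume `f → 0`. The same dichotomy for
the conjugate `z ↦ 1/f(1/z)` is decided by Liouville: `f` cannot also tend to `0` at `∞`.
So `f` and its conjugate both extend to entire functions vanishing at `0`, with nonzero
derivative there because their inverses extend as well. Hence `f(z)/z` extends to an entire
function with a finite limit at `∞` (the reciprocal of the conjugate's derivative at `0`), and
is constant by Liouville.
-/

open Filter Topology Bornology Metric Set Function

theorem IsPreconnected.forall_lt_or_forall_gt {X : Type*} [TopologicalSpace X] {s : Set X}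
    (hs : IsPreconnected s) {φ : X → ℝ} (hφ : ContinuousOn φ s) {c : ℝ}
    (hc : ∀ x ∈ s, φ x ≠ c) : (∀ x ∈ s, φ x < c) ∨ ∀ x ∈ s, c < φ x := by
  by_contra! ⟨⟨x, hx, hxc⟩, ⟨y, hy, hyc⟩⟩
  obtain ⟨z, hz, hzc⟩ := hs.intermediate_value hy hx hφ ⟨hyc, hxc⟩
  exact hc z hz hzc

theorem Complex.isPreconnected_ball_inter_compl_zero {r : ℝ} (hr : 0 < r) :
    IsPreconnected (ball (0 : ℂ) r ∩ {0}ᶜ) := by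
  have hexp : Complex.exp '' {w | w.re < Real.log r} = ball 0 r ∩ {0}ᶜ := by
    ext z
    constructor
    · rintro ⟨w, hw, rfl⟩
      refine ⟨?_, Complex.exp_ne_zero w⟩
      rw [mem_ball_zero_iff, Complex.norm_exp, ← Real.exp_log hr]
      exact Real.exp_lt_exp.2 hw
    · rintro ⟨hzr, hz⟩
      refine ⟨Complex.log z, ?_, Complex.exp_log hz⟩
      rw [mem_ofPred_eq, Complex.log_re]
      exact Real.log_lt_log (norm_pos_iff.2 hz) (mem_ball_zero_iff.1 hzr)
  rw [← hexp]
  exact ((convex_halfSpace_re_lt _).isPreconnected).image _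
    Complex.continuous_exp.continuousOn

theorem eventually_notMem_of_leftInvOn {X Y : Type*} [TopologicalSpace X] [T2Space X]
    [TopologicalSpace Y] {f : X → Y} {g : Y → X} {l : Filter X} {x₀ : X} {K : Set Y}
    (hK : IsCompact K) (hg : ContinuousOn g K) (hx₀ : x₀ ∉ g '' K) (hl : l ≤ 𝓝 x₀)
    (hgf : ∀ᶠ x in l, g (f x) = x) : ∀ᶠ x in l, f x ∉ K := by
  have hnhds : (g '' K)ᶜ ∈ 𝓝 x₀ :=
    (hK.image_of_continuousOn hg).isClosed.isOpen_compl.mem_nhds hx₀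
  filter_upwards [hl hnhds, hgf] with x hx hgfx hfx
  exact hx ⟨f x, hfx, hgfx⟩

theorem Complex.tendsto_zero_or_cobounded_of_leftInvOn {f g : ℂ → ℂ}
    (hf : ContinuousOn f {0}ᶜ) (hg : ContinuousOn g {0}ᶜ) (hg0 : MapsTo g {0}ᶜ {0}ᶜ)
    (hgf : LeftInvOn g f {0}ᶜ) :
    Tendsto f (𝓝[≠] 0) (𝓝 0) ∨ Tendsto f (𝓝[≠] 0) (cobounded ℂ) := by
  have escape : ∀ r R : ℝ, 0 < r → ∀ᶠ z in 𝓝[≠] 0, ‖f z‖ < r ∨ R < ‖f z‖ := by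
    intro r R hr
    have hK : closedBall (0 : ℂ) R \ ball 0 r ⊆ {0}ᶜ := by
      rintro w ⟨-, hw⟩ rfl
      exact hw (mem_ball_self hr)
    filter_upwards [eventually_notMem_of_leftInvOn ((isCompact_closedBall 0 R).diff isOpen_ball)
      (hg.mono hK) (fun ⟨w, hw, hgw⟩ => hg0 (hK hw) hgw) nhdsWithin_le_nhds
      (eventually_nhdsWithin_of_forall hgf)] with z hz
    simp only [Set.mem_sdiff, mem_closedBall_zero_iff, mem_ball_zero_iff, not_and, not_not] at hz
    by_contra! h
    exact (hz h.2).not_ge h.1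
  obtain ⟨δ, hδ, hball⟩ := Metric.mem_nhdsWithin_iff.1 (escape 1 1 one_pos)
  have hP : ball (0 : ℂ) δ ∩ {0}ᶜ ∈ 𝓝[≠] 0 :=
    inter_mem (mem_nhdsWithin_of_mem_nhds (ball_mem_nhds 0 hδ)) self_mem_nhdsWithin
  rcases (Complex.isPreconnected_ball_inter_compl_zero hδ).forall_lt_or_forall_gt
      (hf.norm.mono inter_subset_right) (fun z hz => (hball hz).elim ne_of_lt ne_of_gt)
    with hsmall | hbig
  · left
    rw [Metric.tendsto_nhds]
    intro ε hε
    filter_upwards [escape (min ε 1) 1 (by positivity), hP] with z hz hzP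
    rw [dist_zero_right]
    exact (hz.resolve_right (hsmall z hzP).not_gt).trans_le (min_le_left _ _)
  · right
    rw [← tendsto_norm_atTop_iff_cobounded, Filter.tendsto_atTop]
    intro b
    filter_upwards [escape 1 (max b 1) one_pos, hP] with z hz hzP
    exact (le_max_left _ _).trans (hz.resolve_left (hbig z hzP).not_gt).le

theorem differentiable_update_of_tendsto {E : Type*} [NormedAddCommGroup E] [NormedSpace ℂ E]
    [CompleteSpace E] {u : ℂ → E} {c : ℂ} {a : E} (hu : ∀ z, z ≠ c → DifferentiableAt ℂ u z)
    (h : Tendsto u (𝓝[≠] c) (𝓝 a)) : Differentiable ℂ (update u c a) := by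
  rw [← differentiableOn_univ,
    ← Complex.differentiableOn_compl_singleton_and_continuousAt_iff univ_mem]
  refine ⟨fun z hz => ?_, continuousAt_update_same.2 h⟩
  exact ((hu z hz.2).congr_of_eventuallyEq
    ((eventually_ne_nhds hz.2).mono fun w hw => update_of_ne hw _ _)).differentiableWithinAt

theorem deriv_ne_zero_of_leftInverse {𝕜 : Type*} [NontriviallyNormedField 𝕜] {F G : 𝕜 → 𝕜}
    {a : 𝕜} (hF : DifferentiableAt 𝕜 F a) (hG : DifferentiableAt 𝕜 G (F a))
    (h : LeftInverse G F) : deriv F a ≠ 0 := by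
  have hchain : deriv G (F a) * deriv F a = 1 := by
    rw [← deriv_comp a hG hF, h.comp_eq_id, deriv_id]
  exact right_ne_zero_of_mul_eq_one hchain

theorem Complex.apply_eq_zero_of_tendsto_nhdsNE_of_tendsto_cobounded {u : ℂ → ℂ}
    (hu : ∀ z, z ≠ 0 → DifferentiableAt ℂ u z) (hzero : Tendsto u (𝓝[≠] 0) (𝓝 0))
    (hcob : Tendsto u (cobounded ℂ) (𝓝 0)) {z : ℂ} (hz : z ≠ 0) : u z = 0 := by
  have hcocompact : Tendsto (update u 0 0) (cocompact ℂ) (𝓝 0) := by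
    rw [← Metric.cobounded_eq_cocompact]
    exact hcob.congr' (by
      filter_upwards [eventually_ne_cobounded 0] with w hw using (update_of_ne hw _ _).symm)
  rw [← (differentiable_update_of_tendsto hu hzero).apply_eq_of_tendsto_cocompact z hcocompact,
    update_of_ne hz]

theorem isBiholoCStar_inv : IsBiholoCStar (Inv.inv : ℂ → ℂ) :=
  ⟨fun _ hz => differentiableAt_inv hz, fun _ hz => inv_ne_zero hz, Inv.inv,
    fun _ hz => differentiableAt_inv hz, fun _ hz => inv_ne_zero hz, fun z _ => inv_inv z,
    fun z _ => inv_inv z⟩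

theorem isBiholoCStar_const_mul {a : ℂ} (ha : a ≠ 0) : IsBiholoCStar (a * ·) :=
  ⟨fun _ _ => differentiableAt_id.const_mul a, fun _ hz => mul_ne_zero ha hz, (a⁻¹ * ·),
    fun _ _ => differentiableAt_id.const_mul _, fun _ hz => mul_ne_zero (inv_ne_zero ha) hz,
    fun z _ => inv_mul_cancel_left₀ ha z, fun z _ => mul_inv_cancel_left₀ ha z⟩

namespace IsBiholoCStar

variable {f g : ℂ → ℂ}

theorem comp (hf : IsBiholoCStar f) (hg : IsBiholoCStar g) : IsBiholoCStar (f ∘ g) := by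
  obtain ⟨hfd, hf0, f', hf'd, hf'0, hf'f, hff'⟩ := hf
  obtain ⟨hgd, hg0, g', hg'd, hg'0, hg'g, hgg'⟩ := hg
  refine ⟨fun z hz => (hfd _ (hg0 z hz)).comp z (hgd z hz), fun z hz => hf0 _ (hg0 z hz),
    g' ∘ f', fun z hz => (hg'd _ (hf'0 z hz)).comp z (hf'd z hz), fun z hz => hg'0 _ (hf'0 z hz),
    fun z hz => ?_, fun z hz => ?_⟩
  · simp only [comp_apply, hf'f _ (hg0 z hz), hg'g z hz]
  · simp only [comp_apply, hgg' _ (hf'0 z hz), hff' z hz]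

theorem tendsto_zero_or_cobounded (hf : IsBiholoCStar f) :
    Tendsto f (𝓝[≠] 0) (𝓝 0) ∨ Tendsto f (𝓝[≠] 0) (cobounded ℂ) := by
  obtain ⟨hfd, -, g, hgd, hg0, hgf, -⟩ := hf
  exact Complex.tendsto_zero_or_cobounded_of_leftInvOn
    (fun z hz => (hfd z hz).continuousAt.continuousWithinAt)
    (fun z hz => (hgd z hz).continuousAt.continuousWithinAt) hg0 hgf

theorem deriv_update_ne_zero (hf : IsBiholoCStar f) (hzero : Tendsto f (𝓝[≠] 0) (𝓝 0)) :
    deriv (update f 0 0) 0 ≠ 0 := by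
  obtain ⟨hfd, hf0, g, hgd, hg0, hgf, hfg⟩ := hf
  have hf' : Tendsto f (𝓝[≠] 0) (𝓝[≠] 0) :=
    tendsto_nhdsWithin_iff.2 ⟨hzero, eventually_nhdsWithin_of_forall hf0⟩
  -- `g → ∞` at `0` would make `z = g (f z) → ∞` as `z → 0`
  have hgzero : Tendsto g (𝓝[≠] 0) (𝓝 0) := by
    refine (tendsto_zero_or_cobounded ⟨hgd, hg0, f, hfd, hf0, hfg, hgf⟩).resolve_right
      fun hcob => ?_
    have hid : Tendsto id (𝓝[≠] (0 : ℂ)) (cobounded ℂ) :=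
      (hcob.comp hf').congr' (eventually_nhdsWithin_of_forall hgf)
    exact (tendsto_id.mono_left nhdsWithin_le_nhds).not_tendsto (disjoint_nhds_cobounded 0) hid
  refine deriv_ne_zero_of_leftInverse (differentiable_update_of_tendsto hfd hzero 0)
    (differentiable_update_of_tendsto hgd hgzero _) fun z => ?_
  rcases eq_or_ne z 0 with rfl | hz
  · simp
  · simp [hz, hf0 z hz, hgf z hz]

theorem exists_eq_const_mul_of_tendsto_zero (hf : IsBiholoCStar f)
    (hzero : Tendsto f (𝓝[≠] 0) (𝓝 0)) : ∃ a, a ≠ 0 ∧ ∀ z, z ≠ 0 → f z = a * z := by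
  set f' : ℂ → ℂ := Inv.inv ∘ f ∘ Inv.inv
  have hf' : IsBiholoCStar f' := isBiholoCStar_inv.comp (hf.comp isBiholoCStar_inv)
  have hf'zero : Tendsto f' (𝓝[≠] 0) (𝓝 0) := by
    refine hf'.tendsto_zero_or_cobounded.resolve_right fun hcob => hf.2.1 1 one_ne_zero ?_
    have hcob' : Tendsto f (cobounded ℂ) (𝓝 0) := by
      have := tendsto_inv₀_cobounded.comp (hcob.comp tendsto_inv₀_cobounded')
      simpa [f', Function.comp_def] using this
    exact Complex.apply_eq_zero_of_tendsto_nhdsNE_of_tendsto_cobounded hf.1 hzero hcob' one_ne_zero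
  set F := update f 0 0
  set F' := update f' 0 0
  have hF : Differentiable ℂ F := differentiable_update_of_tendsto hf.1 hzero
  have hF' : Differentiable ℂ F' := differentiable_update_of_tendsto hf'.1 hf'zero
  have hslope : ∀ z, z ≠ 0 → dslope F 0 z = (dslope F' 0 z⁻¹)⁻¹ := by
    intro z hz
    simp [dslope_of_ne, hz, F, F', f', slope_def_field, div_eq_mul_inv, mul_comm]
  have hlim : Tendsto (dslope F 0) (cocompact ℂ) (𝓝 (deriv F' 0)⁻¹) := by
    rw [← Metric.cobounded_eq_cocompact, ← dslope_same]
    refine (((continuousAt_dslope_same.2 (hF' 0)).tendsto.comp tendsto_inv₀_cobounded).inv₀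
      (by simpa using hf'.deriv_update_ne_zero hf'zero)).congr' ?_
    filter_upwards [eventually_ne_cobounded 0] with z hz using (hslope z hz).symm
  refine ⟨(deriv F' 0)⁻¹, inv_ne_zero (hf'.deriv_update_ne_zero hf'zero), fun z hz => ?_⟩
  have hq : Differentiable ℂ (dslope F 0) :=
    differentiableOn_univ.1 ((Complex.differentiableOn_dslope univ_mem).2 hF.differentiableOn)
  rw [← hq.apply_eq_of_tendsto_cocompact z hlim]
  simp [dslope_of_ne, hz, F, slope_def_field]

end IsBiholoCStar

/-- the biholomorphisms of `ℂ∖{0}` are exactly the maps `z ↦ a·z` and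
`z ↦ a/z` with `a ≠ 0`. -/
theorem stmt_2 :
    (∀ f : ℂ → ℂ, IsBiholoCStar f →
      ∃ a : ℂ, a ≠ 0 ∧
        ((∀ z : ℂ, z ≠ 0 → f z = a * z) ∨ (∀ z : ℂ, z ≠ 0 → f z = a / z))) ∧
    (∀ a : ℂ, a ≠ 0 →
      IsBiholoCStar (fun z : ℂ => a * z) ∧ IsBiholoCStar (fun z : ℂ => a / z)) := by
  refine ⟨fun f hf => ?_, fun a ha => ⟨isBiholoCStar_const_mul ha, ?_⟩⟩
  · rcases hf.tendsto_zero_or_cobounded with hzero | hcob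
    · obtain ⟨a, ha, hfa⟩ := hf.exists_eq_const_mul_of_tendsto_zero hzero
      exact ⟨a, ha, Or.inl hfa⟩
    · obtain ⟨a, ha, hfa⟩ := (isBiholoCStar_inv.comp hf).exists_eq_const_mul_of_tendsto_zero
        (tendsto_inv₀_cobounded.comp hcob)
      refine ⟨a⁻¹, inv_ne_zero ha, Or.inr fun z hz => ?_⟩
      have hfz : (f z)⁻¹ = a * z := hfa z hz
      rw [← inv_inv (f z), hfz, mul_inv, div_eq_mul_inv]
  · simpa only [comp_def, div_eq_mul_inv] using
      (isBiholoCStar_const_mul ha).comp isBiholoCStar_inv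
end

section
/- Let h : ℂ → ℂ be an entire function, and let (uₙ) be a sequence of nonzero complex numbers converging to 0 such that for every n there exists a constant cₙ ∈ ℂ with h(w + uₙ) = h(w) + cₙ for all w ∈ ℂ. Then there exist a, b ∈ ℂ such that h(w) = a·w + b for all w ∈ ℂ. If moreover h(w + 2πi) = h(w) for all w ∈ ℂ, then h is constant. -/
/-!
Differentiating `h (w + uₙ) = h w + cₙ` shows that `h'` takes the value `h' 0` at every `uₙ`.
Since the `uₙ` accumulate at `0`, the identity theorem makes `h'` constant, so `h` is affine;
an affine function with a nonzero period has slope `0`.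
-/

open Filter Topology

theorem deriv_add_eq_of_add_eq_add_const {𝕜 F : Type*} [NontriviallyNormedField 𝕜]
    [NormedAddCommGroup F] [NormedSpace 𝕜 F] {f : 𝕜 → F} {t : 𝕜} {c : F}
    (hf : ∀ w, f (w + t) = f w + c) (w : 𝕜) : deriv f (w + t) = deriv f w := by
  have hshift : (fun w => f (w + t)) = fun w => f w + c := funext hf
  calc deriv f (w + t) = deriv (fun w => f (w + t)) w := (deriv_comp_add_const f t w).symm
    _ = deriv (fun w => f w + c) w := by rw [hshift]
    _ = deriv f w := deriv_add_const c

theorem Differentiable.eq_of_eq_on_seq_tendsto {E : Type*} [NormedAddCommGroup E]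
    [NormedSpace ℂ E] [CompleteSpace E] {g : ℂ → E} (hg : Differentiable ℂ g)
    {u : ℕ → ℂ} {z₀ : ℂ} (hu : Tendsto u atTop (𝓝 z₀)) (hne : ∀ n, u n ≠ z₀)
    {a : E} (hga : ∀ n, g (u n) = a) (z : ℂ) : g z = a := by
  have hu' : Tendsto u atTop (𝓝[≠] z₀) :=
    tendsto_nhdsWithin_of_tendsto_nhds_of_eventually_within u hu (Eventually.of_forall hne)
  have hfreq : ∃ᶠ z in 𝓝[≠] z₀, g z = a := hu'.frequently (Frequently.of_forall hga)
  have hg' : AnalyticOnNhd ℂ g Set.univ := fun z _ => hg.analyticAt z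
  exact hg'.eqOn_of_preconnected_of_frequently_eq (fun _ _ => analyticAt_const)
    isPreconnected_univ (Set.mem_univ z₀) hfreq (Set.mem_univ z)

theorem eq_smul_add_of_deriv_eq {𝕜 G : Type*} [RCLike 𝕜] [NormedAddCommGroup G]
    [NormedSpace 𝕜 G] {f : 𝕜 → G} (hf : Differentiable 𝕜 f) {a : G}
    (hderiv : ∀ x, deriv f x = a) (x : 𝕜) : f x = x • a + f 0 := by
  have hdiff : Differentiable 𝕜 fun x => f x - x • a := hf.sub (differentiable_id.smul_const a)
  have hzero : ∀ x, deriv (fun x => f x - x • a) x = 0 := fun x => by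
    have : HasDerivAt (fun x => f x - x • a) (deriv f x - (1 : 𝕜) • a) x :=
      (hf x).hasDerivAt.sub ((hasDerivAt_id x).smul_const a)
    rw [this.deriv, hderiv, one_smul, sub_self]
  have := is_const_of_deriv_eq_zero hdiff hzero x 0
  rw [zero_smul, sub_zero] at this
  rw [← this, add_sub_cancel]

/-- an entire function whose increments along a nonzero null sequence are
constant in `w` is affine-linear; if moreover it is `2πi`-periodic, it is constant. -/
theorem stmt_4 (h : ℂ → ℂ) (hh : Differentiable ℂ h)
    (u : ℕ → ℂ) (hu0 : ∀ n, u n ≠ 0)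
    (hu : Filter.Tendsto u Filter.atTop (nhds 0))
    (hc : ∀ n : ℕ, ∃ c : ℂ, ∀ w : ℂ, h (w + u n) = h w + c) :
    (∃ a b : ℂ, ∀ w : ℂ, h w = a * w + b) ∧
    ((∀ w : ℂ, h (w + 2 * Real.pi * Complex.I) = h w) → ∃ c : ℂ, ∀ w : ℂ, h w = c) := by
  have hderiv_seq : ∀ n, deriv h (u n) = deriv h 0 := fun n => by
    simpa using deriv_add_eq_of_add_eq_add_const (hc n).choose_spec 0
  have hderiv : ∀ z, deriv h z = deriv h 0 := hh.deriv.eq_of_eq_on_seq_tendsto hu hu0 hderiv_seq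
  have hlin : ∀ w, h w = deriv h 0 * w + h 0 := fun w => by
    rw [eq_smul_add_of_deriv_eq hh hderiv w, smul_eq_mul, mul_comm]
  refine ⟨⟨_, _, hlin⟩, fun hper => ⟨h 0, fun w => ?_⟩⟩
  have hslope : deriv h 0 * (2 * Real.pi * Complex.I) = 0 := by
    have := hper 0
    rw [hlin, hlin 0] at this
    linear_combination this
  rw [hlin w, (mul_eq_zero.mp hslope).resolve_right Complex.two_pi_I_ne_zero, zero_mul, zero_add]
end

section
/- Let Γ be a finitely generated subgroup of the multiplicative group ℂˣ of nonzero complex numbers. Then Γ is discrete in the topology induced from ℂ if and only if either Γ is finite, or there exist an integer N ≥ 1 and q ∈ ℂˣ with |q| ≠ 1 such that the map (ζ, m) ↦ ζ·q^m is a group isomorphism from μ_N × ℤ onto Γ, where μ_N = {ζ ∈ ℂˣ : ζ^N = 1}. -/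
/-!
A subgroup `Γ` of `ℂˣ` is discrete in `ℂ` iff it is discrete in `ℂˣ`; it is then closed there, so
it meets every compact annulus `e⁻ᶜ ≤ |z| ≤ eᶜ` in a finite set. Hence `log |Γ|` is a discrete,
thus cyclic, subgroup `ℤ a` of `ℝ`, and `Γ ∩ {|z| = 1}` is a finite subgroup of `ℂˣ`, i.e. `μ_N`
for `N` its order. If `a = 0` then `Γ = μ_N`; otherwise `(ζ, m) ↦ ζ q^m` with `log |q| = a` is the
required isomorphism. Conversely, `μ_N × qᶻ` meets the neighbourhood `|log |z|| < |log |q||` of `1`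
only in `μ_N`, which is finite.
-/

open Filter Topology Set

theorem isDiscrete_iff_forall_exists_mem_nhds_inter_eq_singleton {X : Type*}
    [TopologicalSpace X] {s : Set X} :
    IsDiscrete s ↔ ∀ x ∈ s, ∃ U ∈ 𝓝 x, U ∩ s = {x} := by
  refine ⟨fun hs _ hx => nhds_inter_eq_singleton_of_mem_discrete hs hx,
    fun h => .of_nhdsWithin fun x hx => ?_⟩
  obtain ⟨U, hU, hUs⟩ := h x hx
  rw [le_pure_iff, ← hUs, inter_comm]
  exact inter_mem_nhdsWithin s hU

@[to_additive]
theorem Subgroup.discreteTopology_of_finite_inter_nhds_one {G : Type*} [Group G]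
    [TopologicalSpace G] [IsTopologicalGroup G] [T1Space G] {H : Subgroup G} {U : Set G}
    (hU : U ∈ 𝓝 1) (hfin : (U ∩ H).Finite) : DiscreteTopology H := by
  have hV : U \ ((U ∩ H) \ {1}) ∈ 𝓝 (1 : G) :=
    sdiff_mem hU (hfin.sdiff.isClosed.compl_mem_nhds fun h => h.2 rfl)
  obtain ⟨V, hVU, hVopen, hV1⟩ := mem_nhds_iff.mp hV
  refine discreteTopology_of_isOpen_singleton_one (isOpen_induced_iff.mpr ⟨V, hVopen, ?_⟩)
  ext ⟨g, hg⟩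
  simp only [mem_preimage, mem_singleton_iff, Subgroup.mk_eq_one]
  refine ⟨fun hgV => ?_, fun h => h ▸ hV1⟩
  by_contra hg1
  exact (hVU hgV).2 ⟨⟨(hVU hgV).1, hg⟩, hg1⟩

theorem Subgroup.finite_inter_of_isCompact {G : Type*} [Group G] [TopologicalSpace G]
    [IsTopologicalGroup G] [T2Space G] (H : Subgroup G) [DiscreteTopology H] {K : Set G}
    (hK : IsCompact K) : (K ∩ H).Finite :=
  (hK.inter_right H.isClosed_of_discrete).finite
    ((isDiscrete_iff_discreteTopology.mpr ‹_›).mono inter_subset_right)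

theorem Subgroup.eq_rootsOfUnity_natCard {R : Type*} [CommRing R] [IsDomain R]
    (H : Subgroup Rˣ) [Finite H] : H = rootsOfUnity (Nat.card H) R := by
  have : NeZero (Nat.card H) := ⟨Nat.card_pos.ne'⟩
  refine Subgroup.eq_of_le_of_card_ge (fun ζ hζ => (mem_rootsOfUnity _ _).mpr ?_)
    (card_rootsOfUnity R _)
  simpa only [SubmonoidClass.coe_pow, OneMemClass.coe_one] using
    congrArg Subtype.val (pow_card_eq_one' (G := H) (x := ⟨ζ, hζ⟩))

theorem Subgroup.isDiscrete_image_val_iff {G₀ : Type*} [GroupWithZero G₀] [TopologicalSpace G₀]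
    [ContinuousInv₀ G₀] (H : Subgroup G₀ˣ) :
    IsDiscrete (((↑) : G₀ˣ → G₀) '' H) ↔ DiscreteTopology H := by
  refine ⟨fun h => isDiscrete_iff_discreteTopology.mp ?_,
    fun h => (isDiscrete_iff_discreteTopology.mpr h).image Units.isEmbedding_val₀.isInducing⟩
  simpa [Set.preimage_image_eq _ Units.val_injective] using
    h.preimage Units.continuous_val.continuousOn Units.val_injective

noncomputable def logNorm (z : ℂˣ) : ℝ := Real.log ‖(z : ℂ)‖

@[simp] theorem logNorm_one : logNorm 1 = 0 := by simp [logNorm]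

@[simp] theorem logNorm_mul (z w : ℂˣ) : logNorm (z * w) = logNorm z + logNorm w := by
  simp [logNorm, Real.log_mul]

@[simp] theorem logNorm_inv (z : ℂˣ) : logNorm z⁻¹ = -logNorm z := by
  simp [logNorm, Real.log_inv]

@[simp] theorem logNorm_zpow (z : ℂˣ) (m : ℤ) : logNorm (z ^ m) = m * logNorm z := by
  simp [logNorm, Real.log_zpow]

theorem logNorm_eq_zero {z : ℂˣ} : logNorm z = 0 ↔ ‖(z : ℂ)‖ = 1 := by
  have hz : 0 < ‖(z : ℂ)‖ := norm_pos_iff.mpr z.ne_zero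
  exact ⟨fun h => by rw [← Real.exp_log hz, ← logNorm, h, Real.exp_zero],
    fun h => by rw [logNorm, h, Real.log_one]⟩

theorem logNorm_eq_zero_of_pow_eq_one {N : ℕ} (hN : N ≠ 0) {ζ : ℂˣ} (hζ : ζ ^ N = 1) :
    logNorm ζ = 0 := by
  have h := congrArg logNorm hζ
  rw [← zpow_natCast, logNorm_zpow, logNorm_one] at h
  exact (mul_eq_zero.mp h).resolve_left (Nat.cast_ne_zero.mpr hN)

theorem continuous_logNorm : Continuous logNorm :=
  (Real.continuousOn_log.comp_continuous (continuous_norm.comp Units.continuous_val)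
    fun z => by simp).congr fun _ => rfl

theorem isCompact_logNorm_preimage_Icc (c : ℝ) : IsCompact (logNorm ⁻¹' Icc (-c) c) := by
  rw [Units.isEmbedding_val₀.isCompact_iff]
  have himage : (↑) '' (logNorm ⁻¹' Icc (-c) c) =
      {w : ℂ | ‖w‖ ∈ Icc (Real.exp (-c)) (Real.exp c)} := by
    ext w
    constructor
    · rintro ⟨z, ⟨hlo, hhi⟩, rfl⟩
      have hz : 0 < ‖(z : ℂ)‖ := norm_pos_iff.mpr z.ne_zero
      exact ⟨(Real.le_log_iff_exp_le hz).mp hlo, (Real.log_le_iff_le_exp hz).mp hhi⟩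
    · rintro ⟨hlo, hhi⟩
      have hw : 0 < ‖w‖ := (Real.exp_pos _).trans_le hlo
      refine ⟨Units.mk0 w (norm_pos_iff.mp hw), ⟨?_, ?_⟩, rfl⟩
      · exact (Real.le_log_iff_exp_le hw).mpr hlo
      · exact (Real.log_le_iff_le_exp hw).mpr hhi
  rw [himage]
  exact Metric.isCompact_of_isClosed_isBounded (isClosed_Icc.preimage continuous_norm)
    ((Metric.isBounded_closedBall (x := (0 : ℂ)) (r := Real.exp c)).subset
      fun w hw => by simpa using hw.2)

def unitCircle : Subgroup ℂˣ where
  carrier := {z | logNorm z = 0}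
  one_mem' := logNorm_one
  mul_mem' {z w} hz hw := by simp_all
  inv_mem' {z} hz := by simp_all

def logNormSubgroup (Γ : Subgroup ℂˣ) : AddSubgroup ℝ where
  carrier := logNorm '' Γ
  zero_mem' := ⟨1, Γ.one_mem, logNorm_one⟩
  add_mem' := by
    rintro _ _ ⟨z, hz, rfl⟩ ⟨w, hw, rfl⟩
    exact ⟨z * w, Γ.mul_mem hz hw, logNorm_mul z w⟩
  neg_mem' := by
    rintro _ ⟨z, hz, rfl⟩
    exact ⟨z⁻¹, Γ.inv_mem hz, logNorm_inv z⟩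

def rootsOfUnityMulZPow (N : ℕ) (q : ℂˣ) (p : {ζ : ℂˣ // ζ ^ N = 1} × ℤ) : ℂˣ :=
  p.1 * q ^ p.2

theorem logNorm_rootsOfUnityMulZPow {N : ℕ} (hN : N ≠ 0) (q : ℂˣ)
    (p : {ζ : ℂˣ // ζ ^ N = 1} × ℤ) : logNorm (rootsOfUnityMulZPow N q p) = p.2 * logNorm q := by
  simp [rootsOfUnityMulZPow, logNorm_eq_zero_of_pow_eq_one hN p.1.2]

theorem injective_rootsOfUnityMulZPow {N : ℕ} (hN : N ≠ 0) {q : ℂˣ} (hq : logNorm q ≠ 0) :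
    Function.Injective (rootsOfUnityMulZPow N q) := by
  rintro ⟨ζ₁, m₁⟩ ⟨ζ₂, m₂⟩ h
  have hm : m₁ = m₂ := by
    have := congrArg logNorm h
    simp only [logNorm_rootsOfUnityMulZPow hN, mul_left_inj' hq, Int.cast_inj] at this
    exact this
  subst hm
  simp only [rootsOfUnityMulZPow, mul_left_inj] at h
  rw [Subtype.ext h]

theorem range_rootsOfUnityMulZPow {Γ : Subgroup ℂˣ} {N : ℕ} {q : ℂˣ} (hq : q ∈ Γ)
    (hcircle : Γ ⊓ unitCircle = rootsOfUnity N ℂ)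
    (hlog : logNormSubgroup Γ = AddSubgroup.zmultiples (logNorm q)) :
    Set.range (rootsOfUnityMulZPow N q) = Γ := by
  have hroots : ∀ ζ : ℂˣ, ζ ^ N = 1 ↔ ζ ∈ Γ ∧ logNorm ζ = 0 := fun ζ => by
    rw [← mem_rootsOfUnity, ← hcircle]; rfl
  ext γ
  constructor
  · rintro ⟨⟨ζ, m⟩, rfl⟩
    exact Γ.mul_mem ((hroots ζ).mp ζ.2).1 (Γ.zpow_mem hq m)
  · intro hγ
    obtain ⟨m, hm⟩ : ∃ m : ℤ, m • logNorm q = logNorm γ :=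
      AddSubgroup.mem_zmultiples_iff.mp (hlog ▸ ⟨γ, hγ, rfl⟩)
    have hζ : (γ * (q ^ m)⁻¹) ^ N = 1 :=
      (hroots _).mpr ⟨Γ.mul_mem hγ (Γ.inv_mem (Γ.zpow_mem hq m)), by simp [← hm]⟩
    exact ⟨⟨⟨_, hζ⟩, m⟩, by simp [rootsOfUnityMulZPow]⟩

theorem discreteTopology_of_range_rootsOfUnityMulZPow {Γ : Subgroup ℂˣ} {N : ℕ} (hN : N ≠ 0)
    {q : ℂˣ} (hq : logNorm q ≠ 0) (hΓ : Set.range (rootsOfUnityMulZPow N q) = Γ) :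
    DiscreteTopology Γ := by
  have : NeZero N := ⟨hN⟩
  have hroots : (rootsOfUnity N ℂ : Set ℂˣ).Finite :=
    Set.finite_coe_iff.mp (inferInstanceAs (Finite (rootsOfUnity N ℂ)))
  have hU : logNorm ⁻¹' Ioo (-|logNorm q|) |logNorm q| ∈ 𝓝 1 :=
    continuous_logNorm.continuousAt.preimage_mem_nhds
      (Ioo_mem_nhds (by simpa using hq) (by simpa using hq))
  refine Subgroup.discreteTopology_of_finite_inter_nhds_one hU (hroots.subset ?_)
  rintro γ ⟨hγ, hγΓ⟩
  obtain ⟨p, rfl⟩ := hΓ ▸ hγΓ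
  have hm : p.2 = 0 := by
    rw [mem_preimage, logNorm_rootsOfUnityMulZPow hN, mem_Ioo, ← abs_lt, abs_mul,
      mul_lt_iff_lt_one_left (abs_pos.mpr hq), ← Int.cast_abs, ← Int.cast_one, Int.cast_lt,
      Int.abs_lt_one_iff] at hγ
    exact hγ
  simpa [rootsOfUnityMulZPow, hm] using p.1.2

theorem finite_or_eq_range_rootsOfUnityMulZPow (Γ : Subgroup ℂˣ) [DiscreteTopology Γ] :
    (Γ : Set ℂˣ).Finite ∨ ∃ N : ℕ, 1 ≤ N ∧ ∃ q : ℂˣ, logNorm q ≠ 0 ∧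
      Function.Injective (rootsOfUnityMulZPow N q) ∧
      Set.range (rootsOfUnityMulZPow N q) = Γ := by
  have hfin (c : ℝ) : (logNorm ⁻¹' Icc (-c) c ∩ Γ).Finite :=
    Γ.finite_inter_of_isCompact (isCompact_logNorm_preimage_Icc c)
  have : DiscreteTopology (logNormSubgroup Γ) := by
    refine AddSubgroup.discreteTopology_of_finite_inter_nhds_zero
      (Icc_mem_nhds (neg_lt_zero.mpr one_pos) one_pos) (((hfin 1).image logNorm).subset ?_)
    rintro _ ⟨hx, γ, hγ, rfl⟩
    exact ⟨γ, ⟨hx, hγ⟩, rfl⟩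
  obtain ⟨a, ha⟩ := ((logNormSubgroup Γ).isAddCyclic_iff_exists_zmultiples_eq_top).mp
    (AddSubgroup.discrete_iff_addCyclic.mpr this)
  have : Finite (Γ ⊓ unitCircle : Subgroup ℂˣ) :=
    ((hfin 0).subset fun γ hγ => ⟨by simp [show logNorm γ = 0 from hγ.2], hγ.1⟩).to_subtype
  set N := Nat.card (Γ ⊓ unitCircle : Subgroup ℂˣ)
  by_cases ha0 : a = 0
  · left
    refine (hfin 0).subset fun γ hγ => ⟨?_, hγ⟩
    have : logNorm γ ∈ AddSubgroup.zmultiples a := ha ▸ ⟨γ, hγ, rfl⟩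
    simpa [ha0] using this
  · right
    obtain ⟨q, hq, rfl⟩ : a ∈ logNormSubgroup Γ := ha ▸ AddSubgroup.mem_zmultiples a
    exact ⟨N, Nat.card_pos, q, ha0, injective_rootsOfUnityMulZPow Nat.card_pos.ne' ha0,
      range_rootsOfUnityMulZPow hq (Subgroup.eq_rootsOfUnity_natCard _) ha.symm⟩

theorem stmt_6_general (Γ : Subgroup ℂˣ) :
    (∀ z ∈ ((fun γ : ℂˣ => (γ : ℂ)) '' (Γ : Set ℂˣ)),
        ∃ U ∈ nhds z, U ∩ ((fun γ : ℂˣ => (γ : ℂ)) '' (Γ : Set ℂˣ)) = {z}) ↔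
      ((Γ : Set ℂˣ).Finite ∨
        ∃ N : ℕ, 1 ≤ N ∧ ∃ q : ℂˣ, ‖(q : ℂ)‖ ≠ 1 ∧
          Function.Injective
            (fun p : {ζ : ℂˣ // ζ ^ N = 1} × ℤ => (p.1 : ℂˣ) * q ^ p.2) ∧
          Set.range
            (fun p : {ζ : ℂˣ // ζ ^ N = 1} × ℤ => (p.1 : ℂˣ) * q ^ p.2) =
            (Γ : Set ℂˣ)) := by
  rw [← isDiscrete_iff_forall_exists_mem_nhds_inter_eq_singleton, Γ.isDiscrete_image_val_iff]
  simp only [ne_eq, ← logNorm_eq_zero]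
  refine ⟨fun _ => finite_or_eq_range_rootsOfUnityMulZPow Γ, ?_⟩
  rintro (hfin | ⟨N, hN, q, hq, -, hrange⟩)
  · have := hfin.to_subtype
    infer_instance
  · exact discreteTopology_of_range_rootsOfUnityMulZPow (by omega) hq hrange

/-- a finitely generated subgroup of `ℂˣ` is discrete (in the topology induced
from `ℂ`) iff it is finite or of the form `μ_N × qᶻ` with `|q| ≠ 1`, via `(ζ, m) ↦ ζ·q^m`. -/
theorem stmt_6 (Γ : Subgroup ℂˣ) (hfg : Γ.FG) :
    (∀ z ∈ ((fun γ : ℂˣ => (γ : ℂ)) '' (Γ : Set ℂˣ)),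
        ∃ U ∈ nhds z, U ∩ ((fun γ : ℂˣ => (γ : ℂ)) '' (Γ : Set ℂˣ)) = {z}) ↔
      ((Γ : Set ℂˣ).Finite ∨
        ∃ N : ℕ, 1 ≤ N ∧ ∃ q : ℂˣ, ‖(q : ℂ)‖ ≠ 1 ∧
          Function.Injective
            (fun p : {ζ : ℂˣ // ζ ^ N = 1} × ℤ => (p.1 : ℂˣ) * q ^ p.2) ∧
          Set.range
            (fun p : {ζ : ℂˣ // ζ ^ N = 1} × ℤ => (p.1 : ℂˣ) * q ^ p.2) =
            (Γ : Set ℂˣ)) :=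
  stmt_6_general Γ
end

section
/- Let Γ be a finitely generated subgroup of the multiplicative group ℂˣ of nonzero complex numbers. Then Γ is closed as a subset of ℂ∖{0} if and only if Γ is discrete in the topology induced from ℂ. -/
open Set Topology Filter Function

open Classical in
lemma stmt7_aux_not_countable : ¬ Countable (ℕ → Bool) := by
  intro h
  have hinj : Injective (fun s : Set ℕ => fun n => if n ∈ s then true else false) := by
    intro s t hst
    ext n
    have := congrFun hst n
    by_cases hn : n ∈ s <;> by_cases hm : n ∈ t <;> simp_all
  have : Countable (Set ℕ) := hinj.countable
  obtain ⟨g, hg⟩ := Countable.exists_injective_nat (Set ℕ)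
  exact Function.cantor_injective g hg

/-- a finitely generated subgroup of `ℂˣ` is closed as a subset of `ℂ∖{0}`
iff it is discrete in the topology induced from `ℂ`. -/
theorem stmt_7 (Γ : Subgroup ℂˣ) (hfg : Γ.FG) :
    IsClosed {z : {w : ℂ // w ≠ 0} | ∃ γ : ℂˣ, γ ∈ Γ ∧ (γ : ℂ) = (z : ℂ)} ↔
      ∀ z ∈ ((fun γ : ℂˣ => (γ : ℂ)) '' (Γ : Set ℂˣ)),
        ∃ U ∈ nhds z, U ∩ ((fun γ : ℂˣ => (γ : ℂ)) '' (Γ : Set ℂˣ)) = {z} := by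
  set S : Set ℂ := (fun γ : ℂˣ => (γ : ℂ)) '' (Γ : Set ℂˣ) with hSdef
  have h1S : (1 : ℂ) ∈ S := ⟨1, Γ.one_mem, rfl⟩
  have hSne0 : ∀ x ∈ S, x ≠ 0 := by rintro x ⟨γ, -, rfl⟩; exact γ.ne_zero
  have hdiv : ∀ x ∈ S, ∀ y ∈ S, x / y ∈ S := by
    rintro _ ⟨γ, hγ, rfl⟩ _ ⟨δ, hδ, rfl⟩
    exact ⟨γ * δ⁻¹, Γ.mul_mem hγ (Γ.inv_mem hδ), by
      simp [Units.val_mul, div_eq_mul_inv]⟩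
  -- rewrite the closedness set as a preimage
  have hset : {z : {w : ℂ // w ≠ 0} | ∃ γ : ℂˣ, γ ∈ Γ ∧ (γ : ℂ) = (z : ℂ)}
      = (Subtype.val ⁻¹' S : Set {w : ℂ // w ≠ 0}) := by
    ext z
    simp only [mem_setOf_eq, mem_preimage, hSdef, mem_image, SetLike.mem_coe]
  rw [hset]
  -- key equivalence with a closure condition
  have key : IsClosed (Subtype.val ⁻¹' S : Set {w : ℂ // w ≠ 0}) ↔
      ∀ x ∈ closure S, x ≠ 0 → x ∈ S := by
    constructor
    · intro h x hx hx0
      obtain ⟨C, hC, hpre⟩ := isClosed_induced_iff.mp h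
      have hSC : S ⊆ C := by
        intro s hs
        have : (⟨s, hSne0 s hs⟩ : {w : ℂ // w ≠ 0}) ∈ Subtype.val ⁻¹' S := hs
        rw [← hpre] at this
        exact this
      have hxC : x ∈ C := hC.closure_subset (closure_mono hSC hx)
      have : (⟨x, hx0⟩ : {w : ℂ // w ≠ 0}) ∈ Subtype.val ⁻¹' C := hxC
      rw [hpre] at this
      exact this
    · intro h
      refine isClosed_induced_iff.mpr ⟨closure S, isClosed_closure, ?_⟩
      ext ⟨x, hx0⟩
      exact ⟨fun hx => h x hx hx0, fun hx => subset_closure hx⟩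
  rw [key]
  constructor
  · -- closed → discrete
    intro hcl
    -- countability of S
    obtain ⟨T, hT⟩ := hfg
    have hcount : S.Countable := by
      have h1 : (FreeGroup.lift (Subtype.val : {x // x ∈ (T : Set ℂˣ)} → ℂˣ)).range
          = Subgroup.closure (Set.range (Subtype.val : {x // x ∈ (T : Set ℂˣ)} → ℂˣ)) :=
        FreeGroup.range_lift_eq_closure
      rw [Subtype.range_val] at h1
      rw [hT] at h1
      have : (Γ : Set ℂˣ) = Set.range (FreeGroup.lift (Subtype.val : {x // x ∈ (T : Set ℂˣ)} → ℂˣ)) := by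
        rw [← h1]; rfl
      have hΓc : (Γ : Set ℂˣ).Countable := by
        have hcnt : Countable (FreeGroup {x // x ∈ (T : Set ℂˣ)}) :=
          inferInstanceAs (Countable (Quot _))
        rw [this]
        exact Set.countable_range _
      exact hΓc.image _
    have hclc : (closure S).Countable := by
      have : closure S ⊆ insert 0 S := by
        intro x hx
        by_cases hx0 : x = 0
        · exact hx0 ▸ mem_insert _ _
        · exact mem_insert_of_mem _ (hcl x hx hx0)
      exact (hcount.insert 0).mono this
    -- an isolated point exists
    have hiso : ∃ x ∈ S, ∃ U ∈ 𝓝 x, U ∩ S = {x} := by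
      by_contra hno
      push_neg at hno
      have hpre : Preperfect S := by
        rw [preperfect_iff_nhds]
        intro x hx U hU
        rcases eq_or_ne (U ∩ S) {x} with he | he
        · exact absurd he (hno x hx U hU)
        · by_contra hc
          push_neg at hc
          apply he
          apply Subset.antisymm
          · intro y hy
            by_contra hyx
            exact hyx (hc y hy)
          · rintro y rfl
            exact ⟨mem_of_mem_nhds hU, hx⟩
      have hperf : Perfect (closure S) := hpre.perfect_closure
      obtain ⟨f, hfr, -, hfi⟩ := hperf.exists_nat_bool_injection ⟨1, subset_closure h1S⟩
      have : (Set.range f).Countable := hclc.mono hfr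
      have : Countable (ℕ → Bool) := by
        have := this.to_subtype
        exact (Equiv.ofInjective f hfi).countable_iff.mpr this
      exact stmt7_aux_not_countable this
    -- propagate isolation by translation
    obtain ⟨x, hxS, U, hU, hUS⟩ := hiso
    intro z hz
    have hx0 : x ≠ 0 := hSne0 x hxS
    have hz0 : z ≠ 0 := hSne0 z hz
    set c : ℂ := z / x with hc
    have hc0 : c ≠ 0 := div_ne_zero hz0 hx0
    refine ⟨(Homeomorph.mulLeft₀ c hc0) '' U, ?_, ?_⟩
    · have h1 : (Homeomorph.mulLeft₀ c hc0) '' U ∈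
          Filter.map (Homeomorph.mulLeft₀ c hc0) (𝓝 x) := image_mem_map hU
      rw [(Homeomorph.mulLeft₀ c hc0).map_nhds_eq x] at h1
      have h2 : (Homeomorph.mulLeft₀ c hc0) x = z := by
        simp [Homeomorph.coe_mulLeft₀, hc, div_mul_cancel₀ z hx0]
      rwa [h2] at h1
    · apply Subset.antisymm
      · rintro y ⟨⟨u, hu, rfl⟩, hy⟩
        simp only [Homeomorph.coe_mulLeft₀] at hy ⊢
        have huS : u ∈ S := by
          have h1 : (c * u) / c ∈ S := by
            apply hdiv _ hy
            exact hdiv z hz x hxS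
          rwa [mul_div_cancel_left₀ u hc0] at h1
        have : u = x := by
          have : u ∈ U ∩ S := ⟨hu, huS⟩
          rw [hUS] at this
          exact this
        simp [this, hc, div_mul_cancel₀ z hx0]
      · rw [singleton_subset_iff]
        have hxU : x ∈ U := by
          have hx' : x ∈ U ∩ S := by rw [hUS]; exact mem_singleton x
          exact hx'.1
        refine ⟨⟨x, hxU, ?_⟩, hz⟩
        simp [Homeomorph.coe_mulLeft₀, hc, div_mul_cancel₀ z hx0]
  · -- discrete → closed
    intro hdisc x hx hx0
    obtain ⟨V, hV, hV1⟩ := hdisc 1 h1S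
    have hcont : Tendsto (fun p : ℂ × ℂ => p.1 / p.2) (𝓝 (x, x)) (𝓝 1) := by
      have : ContinuousAt (fun p : ℂ × ℂ => p.1 / p.2) (x, x) :=
        ContinuousAt.div continuousAt_fst continuousAt_snd hx0
      rw [ContinuousAt] at this
      have he : ((x, x) : ℂ × ℂ).1 / ((x, x) : ℂ × ℂ).2 = 1 := div_self hx0
      rwa [he] at this
    have hpre : (fun p : ℂ × ℂ => p.1 / p.2) ⁻¹' V ∈ 𝓝 (x, x) := hcont hV
    rw [nhds_prod_eq] at hpre
    obtain ⟨W₁, hW₁, W₂, hW₂, hWsub⟩ := mem_prod_iff.mp hpre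
    obtain ⟨W, hWsub', hWopen, hxW⟩ := mem_nhds_iff.mp (inter_mem hW₁ hW₂)
    obtain ⟨s, hsW, hsS⟩ := mem_closure_iff.mp hx W hWopen hxW
    have hs0 : s ≠ 0 := hSne0 s hsS
    have huniq : ∀ t ∈ S ∩ W, t = s := by
      rintro t ⟨htS, htW⟩
      have h1 : t / s ∈ V :=
        hWsub (show (t, s) ∈ W₁ ×ˢ W₂ from ⟨(hWsub' htW).1, (hWsub' hsW).2⟩)
      have h2 : t / s ∈ S := hdiv t htS s hsS
      have : t / s ∈ V ∩ S := ⟨h1, h2⟩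
      rw [hV1] at this
      exact (div_eq_one_iff_eq hs0).mp this
    have hxs : x = s := by
      have : x ∈ closure ({s} : Set ℂ) := by
        rw [mem_closure_iff]
        intro o ho hxo
        refine ⟨s, ?_, rfl⟩
        obtain ⟨t, htoW, htS⟩ := mem_closure_iff.mp hx (o ∩ W) (ho.inter hWopen) ⟨hxo, hxW⟩
        have := huniq t ⟨htS, htoW.2⟩
        exact this ▸ htoW.1
      simpa using this
    exact hxs ▸ hsS
end

section
/- Let Γ be a subgroup of ℂˣ with the accumulation property. Let ψ : ℂ → ℂ be holomorphic on ℂ∖{0} with ψ(z) ≠ 0 for every z ≠ 0, and let σ : Γ → Γ be a group homomorphism such that ψ(γ·z) = σ(γ)·ψ(z) for every γ ∈ Γ and every z ≠ 0. Then there exist a ∈ ℂ with a ≠ 0 and n ∈ ℤ such that ψ(z) = a·z^n for all z ≠ 0 (integer power) and σ(γ) = γ^n for all γ ∈ Γ. -/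
/-!
Pull `ψ` back along `exp`: `φ = ψ ∘ exp` is entire and nonvanishing with
`φ (w + log γ) = σ γ * φ w`, so its logarithmic derivative is an entire function having `2πi` and
every `log γ` (`γ ∈ Γ`) as periods. The accumulation property makes it constant: an element
`q` with `‖q‖ ≠ 1` gives a period `log q` that is `ℝ`-independent of `2πi` (Liouville on a
compact fundamental parallelogram), while a sequence `γₙ → 1` gives periods `log γₙ → 0`
(identity theorem). Hence `φ w = ψ 1 * exp (c * w)`, `2πi`-periodicity of `φ` makes `c` an
integer `n`, so `ψ z = ψ 1 * z ^ n`, and the functional equation at `z = 1` gives `σ γ = γ ^ n`.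
-/

/-- A subgroup of `ℂˣ` has the accumulation property if it contains an element of modulus
`≠ 1`, or a sequence of elements `≠ 1` converging to `1` in `ℂ`. -/
def HasAccumulation (Γ : Subgroup ℂˣ) : Prop :=
  (∃ q : ℂˣ, q ∈ Γ ∧ ‖(q : ℂ)‖ ≠ 1) ∨
    ∃ γ : ℕ → ℂˣ, (∀ n, γ n ∈ Γ) ∧ (∀ n, γ n ≠ 1) ∧
      Filter.Tendsto (fun n => ((γ n : ℂˣ) : ℂ)) Filter.atTop (nhds 1)

open Function Complex Filter Topology
open scoped Real

theorem linearIndependent_log_two_pi_I {x : ℂ} (hx0 : x ≠ 0) (hx : ‖x‖ ≠ 1) :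
    LinearIndependent ℝ ![log x, 2 * π * I] := by
  refine LinearIndependent.pair_iff.2 fun s t hst => ?_
  have hre : s * Real.log ‖x‖ = 0 := by simpa [log_re] using congrArg re hst
  have hlog : Real.log ‖x‖ ≠ 0 :=
    Real.log_ne_zero_of_pos_of_ne_one (norm_pos_iff.2 hx0) hx
  have hs : s = 0 := (mul_eq_zero.1 hre).resolve_right hlog
  subst hs
  have him : t * (2 * π) = 0 := by simpa using congrArg im hst
  exact ⟨rfl, (mul_eq_zero.1 him).resolve_right (by positivity)⟩

section Periodic

variable {E : Type*} [NormedAddCommGroup E] [NormedSpace ℂ E]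

theorem Differentiable.apply_eq_apply_of_periodic_of_linearIndependent {f : ℂ → E}
    (hf : Differentiable ℂ f) {p q : ℂ} (hpq : LinearIndependent ℝ ![p, q])
    (hp : Periodic f p) (hq : Periodic f q) (z w : ℂ) : f z = f w := by
  let b := basisOfLinearIndependentOfCardEqFinrank hpq (by simp)
  have hfract : ∀ x, f x = f (ZSpan.fract b x) := by
    intro x
    have hfloor : Periodic f (ZSpan.floor b x) := by
      rw [ZSpan.floor, Fin.sum_univ_two]
      simp only [Submodule.coe_add, SetLike.val_smul, Module.Basis.restrictScalars_apply, b,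
        coe_basisOfLinearIndependentOfCardEqFinrank, Matrix.cons_val_zero, Matrix.cons_val_one]
      exact (hp.zsmul _).add_period (hq.zsmul _)
    exact (hfloor.sub_eq x).symm
  have hK : IsCompact (closure (ZSpan.fundamentalDomain b)) :=
    (ZSpan.fundamentalDomain_isBounded b).isCompact_closure
  refine hf.apply_eq_apply_of_bounded ?_ z w
  refine ((hK.image hf.continuous).isBounded).subset ?_
  rintro _ ⟨x, rfl⟩
  exact ⟨_, subset_closure (ZSpan.fract_mem_fundamentalDomain b x), (hfract x).symm⟩

theorem Differentiable.apply_eq_apply_of_periodic_of_tendsto_zero [CompleteSpace E] {f : ℂ → E}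
    (hf : Differentiable ℂ f) {p : ℕ → ℂ} (hp : ∀ n, Periodic f (p n)) (hp0 : ∀ n, p n ≠ 0)
    (hlim : Tendsto p atTop (𝓝 0)) (z w : ℂ) : f z = f w := by
  have hfreq : ∃ᶠ x in 𝓝[≠] (0 : ℂ), f x = f 0 :=
    (tendsto_nhdsWithin_of_tendsto_nhds_of_eventually_within _ hlim (.of_forall hp0)).frequently
      (.of_forall fun n => by simpa using hp n 0)
  have hfa : AnalyticOnNhd ℂ f Set.univ := fun x _ => hf.analyticAt x
  have hconst := hfa.eqOn_of_preconnected_of_frequently_eq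
    analyticOnNhd_const isPreconnected_univ (Set.mem_univ 0) hfreq
  exact (hconst (Set.mem_univ z)).trans (hconst (Set.mem_univ w)).symm

theorem HasAccumulation.apply_eq_apply_of_periodic {Γ : Subgroup ℂˣ} (hΓ : HasAccumulation Γ)
    [CompleteSpace E] {f : ℂ → E} (hf : Differentiable ℂ f) (h2πI : Periodic f (2 * π * I))
    (hlog : ∀ γ ∈ Γ, Periodic f (log (γ : ℂ))) (z w : ℂ) : f z = f w := by
  rcases hΓ with ⟨q, hqΓ, hq⟩ | ⟨γ, hγΓ, hγ1, hγlim⟩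
  · exact hf.apply_eq_apply_of_periodic_of_linearIndependent
      (linearIndependent_log_two_pi_I q.ne_zero hq) (hlog q hqΓ) h2πI z w
  · have hlog0 : ∀ n, log (γ n : ℂ) ≠ 0 := fun n h0 =>
      hγ1 n <| Units.ext <| by simpa [h0] using (exp_log (γ n).ne_zero).symm
    have hlim : Tendsto (fun n => log (γ n : ℂ)) atTop (𝓝 0) := by
      simpa [comp_def] using (continuousAt_clog one_mem_slitPlane).tendsto.comp hγlim
    exact hf.apply_eq_apply_of_periodic_of_tendsto_zero (fun n => hlog _ (hγΓ n)) hlog0 hlim z w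

end Periodic

theorem periodic_logDeriv_of_apply_add_eq_mul {𝕜 𝕜' : Type*} [NontriviallyNormedField 𝕜]
    [NontriviallyNormedField 𝕜'] [NormedAlgebra 𝕜 𝕜'] {f : 𝕜 → 𝕜'} {L : 𝕜} {s : 𝕜'}
    (hs : s ≠ 0) (h : ∀ w, f (w + L) = s * f w) : Periodic (logDeriv f) L := fun w =>
  calc logDeriv f (w + L) = logDeriv (fun x => f (x + L)) w := by
        simp only [logDeriv_apply, deriv_comp_add_const]
    _ = logDeriv (fun x => s * f x) w := by simp only [h]
    _ = logDeriv f w := logDeriv_const_mul w s hs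

theorem eq_mul_exp_of_deriv_eq_mul {f : ℂ → ℂ} (hf : Differentiable ℂ f) {c : ℂ}
    (h : ∀ w, deriv f w = c * f w) (w : ℂ) : f w = f 0 * exp (c * w) := by
  have hG : ∀ x, HasDerivAt (fun x => f x * exp (-(c * x))) 0 x := by
    intro x
    have hexp : HasDerivAt (fun x => exp (-(c * x))) (exp (-(c * x)) * -c) x := by
      simpa using ((hasDerivAt_id x).const_mul c).neg.cexp
    exact ((hf x).hasDerivAt.mul hexp).congr_deriv (by rw [h]; ring)
  have hconst := is_const_of_deriv_eq_zero (fun x => (hG x).differentiableAt)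
    (fun x => (hG x).deriv) w 0
  simp only [mul_zero, neg_zero, exp_zero, mul_one] at hconst
  rw [← hconst, mul_assoc, ← exp_add, neg_add_cancel, exp_zero, mul_one]

theorem exists_zpow_of_comp_exp_eq_mul_exp {ψ : ℂ → ℂ} {a c : ℂ} (ha : a ≠ 0)
    (h : ∀ w, ψ (exp w) = a * exp (c * w)) : ∃ n : ℤ, ∀ z ≠ 0, ψ z = a * z ^ n := by
  have hc : exp (c * (2 * π * I)) = 1 := by
    have := h (2 * π * I)
    rw [exp_two_pi_mul_I, ← exp_zero, h 0, mul_zero, exp_zero, mul_one] at this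
    exact (mul_eq_left₀ ha).1 this.symm
  obtain ⟨n, hn⟩ := exp_eq_one_iff.1 hc
  refine ⟨n, fun z hz => ?_⟩
  rw [← exp_log hz, h, mul_right_cancel₀ two_pi_I_ne_zero hn, exp_int_mul]

/-- semi-equivariant holomorphic nonvanishing maps on `ℂ∖{0}` with respect to
a subgroup with accumulation are monomial, and the induced endomorphism is a power map. -/
theorem stmt_10 (Γ : Subgroup ℂˣ) (hacc : HasAccumulation Γ)
    (ψ : ℂ → ℂ)
    (hψ : ∀ z : ℂ, z ≠ 0 → DifferentiableAt ℂ ψ z)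
    (hψ0 : ∀ z : ℂ, z ≠ 0 → ψ z ≠ 0)
    (σ : Γ →* Γ)
    (heq : ∀ γ : Γ, ∀ z : ℂ, z ≠ 0 →
      ψ (((γ : ℂˣ) : ℂ) * z) = (((σ γ : Γ) : ℂˣ) : ℂ) * ψ z) :
    ∃ a : ℂ, a ≠ 0 ∧ ∃ n : ℤ,
      (∀ z : ℂ, z ≠ 0 → ψ z = a * z ^ n) ∧
      ∀ γ : Γ, ((σ γ : Γ) : ℂˣ) = ((γ : ℂˣ)) ^ n := by
  have hψ1 := hψ0 1 one_ne_zero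
  set φ : ℂ → ℂ := fun w => ψ (exp w)
  have hφ : Differentiable ℂ φ := fun w => (hψ _ (exp_ne_zero w)).comp w differentiableAt_exp
  have hφ0 : ∀ w, φ w ≠ 0 := fun w => hψ0 _ (exp_ne_zero w)
  have hlogDeriv : Differentiable ℂ (logDeriv φ) := fun w =>
    ((hφ.analyticAt w).deriv.differentiableAt).div (hφ w) (hφ0 w)
  have h2πI : Periodic (logDeriv φ) (2 * π * I) :=
    periodic_logDeriv_of_apply_add_eq_mul one_ne_zero fun w => by
      simp only [φ, exp_add, exp_two_pi_mul_I, mul_one, one_mul]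
  have hΓ : ∀ γ ∈ Γ, Periodic (logDeriv φ) (log (γ : ℂ)) := fun γ hγ =>
    periodic_logDeriv_of_apply_add_eq_mul (σ ⟨γ, hγ⟩ : ℂˣ).ne_zero fun w => by
      simp only [φ, exp_add, exp_log γ.ne_zero, mul_comm (exp w)]
      exact heq ⟨γ, hγ⟩ _ (exp_ne_zero w)
  have hderiv : ∀ w, deriv φ w = logDeriv φ 0 * φ w := fun w => by
    rw [← hacc.apply_eq_apply_of_periodic hlogDeriv h2πI hΓ w 0, logDeriv_apply,
      div_mul_cancel₀ _ (hφ0 w)]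
  obtain ⟨n, hn⟩ := exists_zpow_of_comp_exp_eq_mul_exp hψ1 fun w => by
    simpa [φ] using eq_mul_exp_of_deriv_eq_mul hφ hderiv w
  refine ⟨ψ 1, hψ1, n, hn, fun γ => Units.ext ?_⟩
  have hγ := heq γ 1 one_ne_zero
  rw [mul_one, hn _ (γ : ℂˣ).ne_zero, mul_comm] at hγ
  simpa using (mul_right_cancel₀ hψ1 hγ).symm
end

section
/- Let Γ be a subgroup of ℂˣ with the accumulation property. Let P, Q ∈ ℂ[X] be nonzero coprime polynomials, and let c : Γ → ℂˣ be a function such that for every γ ∈ Γ the polynomial identity P(γ·X)·Q(X) = c(γ)·Q(γ·X)·P(X) holds, where P(γ·X) denotes the composition of P with the polynomial γ·X. Then P and Q have no zeros in ℂ∖{0}, and there exist c₀ ∈ ℂ with c₀ ≠ 0 and n ∈ ℤ such that P(z)/Q(z) = c₀·z^n for every z ≠ 0. -/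
open Polynomial

theorem HasAccumulation.infinite {Γ : Subgroup ℂˣ} (hacc : HasAccumulation Γ) :
    (Γ : Set ℂˣ).Infinite := by
  intro hfin
  rcases hacc with ⟨q, hqΓ, hq⟩ | ⟨γ, hγΓ, hγ1, hγlim⟩
  · have : Finite Γ := hfin.to_subtype
    have hq_fin : IsOfFinOrder ((q : ℂˣ) : ℂ) :=
      Units.isOfFinOrder_val.mpr <|
        Γ.subtype.isOfFinOrder (isOfFinOrder_of_finite (⟨q, hqΓ⟩ : Γ))
    exact hq hq_fin.norm_eq_one
  · have hclosed : IsClosed (Units.val '' ((Γ : Set ℂˣ) \ {1})) :=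
      (hfin.sdiff.image _).isClosed
    obtain ⟨g, ⟨-, hg1⟩, hg⟩ := hclosed.mem_of_tendsto hγlim
      (Filter.Eventually.of_forall fun n => ⟨γ n, ⟨hγΓ n, hγ1 n⟩, rfl⟩)
    exact hg1 (Units.val_eq_one.mp hg)

theorem HasAccumulation.not_isRoot_of_forall_isRoot_mul {Γ : Subgroup ℂˣ}
    (hacc : HasAccumulation Γ) {P : ℂ[X]} (hP : P ≠ 0)
    (hinv : ∀ γ ∈ Γ, ∀ z, P.IsRoot z → P.IsRoot (γ * z)) {z : ℂ} (hz : z ≠ 0) :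
    ¬ P.IsRoot z := by
  intro hroot
  have horbit : ((fun γ : ℂˣ => (γ : ℂ) * z) '' Γ).Infinite :=
    hacc.infinite.image fun γ _ δ _ h => Units.val_injective (mul_right_cancel₀ hz h)
  refine hP (P.eq_zero_of_infinite_isRoot (horbit.mono ?_))
  rintro _ ⟨γ, hγ, rfl⟩
  exact hinv γ hγ z hroot

theorem IsCoprime.isRoot_mul_of_isRoot {K : Type*} [Field K] {P Q : K[X]} (hcop : IsCoprime P Q)
    {γ a z : K} (h : P.eval (γ * z) * Q.eval z = a * Q.eval (γ * z) * P.eval z)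
    (hz : P.IsRoot z) : P.IsRoot (γ * z) := by
  have hQz : Q.eval z ≠ 0 := by
    have := hcop.map (evalRingHom z)
    simp only [coe_evalRingHom, hz.eq_zero, isCoprime_zero_left] at this
    exact this.ne_zero
  rw [hz.eq_zero, mul_zero] at h
  exact (mul_eq_zero.mp h).resolve_right hQz

theorem eq_C_leadingCoeff_mul_X_pow_natDegree_of_not_isRoot {K : Type*} [Field K] [IsAlgClosed K]
    {P : K[X]} (h : ∀ z, z ≠ 0 → ¬ P.IsRoot z) : P = C P.leadingCoeff * X ^ P.natDegree := by
  have hroots : P.roots = Multiset.replicate P.natDegree 0 := by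
    rw [← IsAlgClosed.card_roots_eq_natDegree]
    exact Multiset.eq_replicate_card.mpr fun r hr =>
      by_contra fun hr0 => h r hr0 (isRoot_of_mem_roots hr)
  conv_lhs =>
    rw [← C_leadingCoeff_mul_prod_multiset_X_sub_C (p := P) IsAlgClosed.card_roots_eq_natDegree]
  simp [hroots]

/-- a rational map semi-equivariant under a subgroup with accumulation has
its zeros and poles in `{0, ∞}`, hence is a monomial. -/
theorem stmt_11 (Γ : Subgroup ℂˣ) (hacc : HasAccumulation Γ)
    (P Q : Polynomial ℂ) (hP : P ≠ 0) (hQ : Q ≠ 0) (hcop : IsCoprime P Q)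
    (c : Γ → ℂˣ)
    (heq : ∀ γ : Γ,
      P.comp (Polynomial.C ((γ : ℂˣ) : ℂ) * Polynomial.X) * Q =
        Polynomial.C ((c γ : ℂˣ) : ℂ) *
          (Q.comp (Polynomial.C ((γ : ℂˣ) : ℂ) * Polynomial.X)) * P) :
    (∀ z : ℂ, z ≠ 0 → P.eval z ≠ 0) ∧ (∀ z : ℂ, z ≠ 0 → Q.eval z ≠ 0) ∧
      ∃ c₀ : ℂ, c₀ ≠ 0 ∧ ∃ n : ℤ,
        ∀ z : ℂ, z ≠ 0 → P.eval z / Q.eval z = c₀ * z ^ n := by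
  have heval (γ : ℂˣ) (hγ : γ ∈ Γ) (z : ℂ) :
      P.eval (γ * z) * Q.eval z = c ⟨γ, hγ⟩ * Q.eval (γ * z) * P.eval z := by
    simpa [eval_comp] using congrArg (eval z) (heq ⟨γ, hγ⟩)
  -- The identity, divided by `c γ`, has the same shape with `P` and `Q` exchanged.
  have heval' (γ : ℂˣ) (hγ : γ ∈ Γ) (z : ℂ) :
      Q.eval (γ * z) * P.eval z = ↑(c ⟨γ, hγ⟩)⁻¹ * P.eval (γ * z) * Q.eval z := by
    rw [Units.val_inv_eq_inv_val]
    field_simp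
    linear_combination -heval γ hγ z
  have hPz : ∀ z : ℂ, z ≠ 0 → P.eval z ≠ 0 := fun z =>
    hacc.not_isRoot_of_forall_isRoot_mul hP fun γ hγ z =>
      hcop.isRoot_mul_of_isRoot (heval γ hγ z)
  have hQz : ∀ z : ℂ, z ≠ 0 → Q.eval z ≠ 0 := fun z =>
    hacc.not_isRoot_of_forall_isRoot_mul hQ fun γ hγ z =>
      hcop.symm.isRoot_mul_of_isRoot (heval' γ hγ z)
  have hPmon := eq_C_leadingCoeff_mul_X_pow_natDegree_of_not_isRoot hPz
  have hQmon := eq_C_leadingCoeff_mul_X_pow_natDegree_of_not_isRoot hQz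
  refine ⟨hPz, hQz, P.leadingCoeff / Q.leadingCoeff,
    div_ne_zero (leadingCoeff_ne_zero.mpr hP) (leadingCoeff_ne_zero.mpr hQ),
    P.natDegree - Q.natDegree, fun z hz => ?_⟩
  conv_lhs => rw [hPmon, hQmon]
  simp only [eval_mul, eval_C, eval_pow, eval_X]
  rw [zpow_sub₀ hz, zpow_natCast, zpow_natCast, mul_div_mul_comm]
end

section
/- Let N ≥ 1 be an integer, m ∈ ℤ, and let ψ : ℂ → ℂ be holomorphic on ℂ∖{0} with ψ(z) ≠ 0 for z ≠ 0. Suppose that ψ(ζ·z) = ζ^m·ψ(z) for every ζ ∈ ℂ with ζ^N = 1 and every z ≠ 0 (with ζ^m the integer power). Then there exists g : ℂ → ℂ holomorphic on ℂ∖{0} with g(w) ≠ 0 for w ≠ 0 such that ψ(z) = z^m·g(z^N) for all z ≠ 0. Conversely, every map of this form satisfies ψ(ζ·z) = ζ^m·ψ(z) for all N-th roots of unity ζ and all z ≠ 0. -/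
/-!
Since `ψ z / z ^ m` is invariant under `z ↦ ζ z` for `ζ ^ N = 1`, it depends only on `z ^ N`,
so `g w := ψ r / r ^ m` is independent of the choice of an `N`-th root `r` of `w`. Computing it
near `w₀ ≠ 0` with the holomorphic branch `w ↦ w₀ ^ (1/N) (w / w₀) ^ (1/N)` shows that `g` is
holomorphic on `ℂ∖{0}`.
-/

open Complex Filter Topology

lemma exists_differentiableAt_pow_eq_self {N : ℕ} (hN : N ≠ 0) {w₀ : ℂ} (hw₀ : w₀ ≠ 0) :
    ∃ r : ℂ → ℂ, DifferentiableAt ℂ r w₀ ∧ ∀ w, r w ^ N = w := by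
  refine ⟨fun w => w₀ ^ (N⁻¹ : ℂ) * (w / w₀) ^ (N⁻¹ : ℂ), ?_, fun w => ?_⟩
  · refine ((differentiableAt_id.div_const w₀).cpow_const ?_).const_mul _
    simp [div_self hw₀, one_mem_slitPlane]
  · rw [mul_pow, cpow_nat_inv_pow _ hN, cpow_nat_inv_pow _ hN, mul_div_cancel₀ _ hw₀]

/-- The function `g` with `ψ z = z ^ m * g (z ^ N)`, computed with the principal `N`-th root. -/
noncomputable def descentAlongPow (N : ℕ) (m : ℤ) (ψ : ℂ → ℂ) (w : ℂ) : ℂ :=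
  ψ (w ^ (N⁻¹ : ℂ)) / (w ^ (N⁻¹ : ℂ)) ^ m

section Equivariant

variable {N : ℕ} {m : ℤ} {ψ : ℂ → ℂ}
  (hψ : ∀ ζ : ℂ, ζ ^ N = 1 → ∀ z : ℂ, z ≠ 0 → ψ (ζ * z) = ζ ^ m * ψ z)
include hψ

lemma div_zpow_eq_of_pow_eq {z₁ z₂ : ℂ} (h₁ : z₁ ≠ 0) (h₂ : z₂ ≠ 0) (hpow : z₁ ^ N = z₂ ^ N) :
    ψ z₁ / z₁ ^ m = ψ z₂ / z₂ ^ m := by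
  have hζ : (z₁ / z₂) ^ N = 1 := by rw [div_pow, hpow, div_self (pow_ne_zero _ h₂)]
  have h := hψ (z₁ / z₂) hζ z₂ h₂
  rw [div_mul_cancel₀ _ h₂] at h
  rw [h, div_zpow]
  field_simp [zpow_ne_zero m h₁, zpow_ne_zero m h₂]

lemma descentAlongPow_eq_of_pow_eq (hN : N ≠ 0) {r : ℂ} (hr : r ≠ 0) :
    descentAlongPow N m ψ (r ^ N) = ψ r / r ^ m := by
  have hrN : r ^ N ≠ 0 := pow_ne_zero _ hr
  have hroot : (r ^ N) ^ (N⁻¹ : ℂ) ≠ 0 := by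
    rw [Ne, cpow_eq_zero_iff]; exact fun h => hrN h.1
  exact div_zpow_eq_of_pow_eq hψ hroot hr (cpow_nat_inv_pow _ hN)

lemma eq_zpow_mul_descentAlongPow (hN : N ≠ 0) {z : ℂ} (hz : z ≠ 0) :
    ψ z = z ^ m * descentAlongPow N m ψ (z ^ N) := by
  rw [descentAlongPow_eq_of_pow_eq hψ hN hz, mul_div_cancel₀ _ (zpow_ne_zero _ hz)]

lemma differentiableAt_descentAlongPow (hN : N ≠ 0)
    (hdiff : ∀ z : ℂ, z ≠ 0 → DifferentiableAt ℂ ψ z) {w₀ : ℂ} (hw₀ : w₀ ≠ 0) :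
    DifferentiableAt ℂ (descentAlongPow N m ψ) w₀ := by
  obtain ⟨r, hr, hrpow⟩ := exists_differentiableAt_pow_eq_self hN hw₀
  have hr_ne : ∀ w, w ≠ 0 → r w ≠ 0 := fun w hw h0 => hw (by rw [← hrpow w, h0, zero_pow hN])
  have hr₀ := hr_ne w₀ hw₀
  have hF : DifferentiableAt ℂ (fun w => ψ (r w) / r w ^ m) w₀ :=
    ((hdiff _ hr₀).comp w₀ hr).div (hr.zpow (Or.inl hr₀)) (zpow_ne_zero _ hr₀)
  refine hF.congr_of_eventuallyEq ?_
  filter_upwards [eventually_ne_nhds hw₀] with w hw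
  conv_lhs => rw [← hrpow w]
  exact descentAlongPow_eq_of_pow_eq hψ hN (hr_ne w hw)

end Equivariant

lemma descentAlongPow_ne_zero {N : ℕ} {m : ℤ} {ψ : ℂ → ℂ} (hne : ∀ z : ℂ, z ≠ 0 → ψ z ≠ 0)
    {w : ℂ} (hw : w ≠ 0) : descentAlongPow N m ψ w ≠ 0 := by
  have hroot : w ^ (N⁻¹ : ℂ) ≠ 0 := by
    rw [Ne, cpow_eq_zero_iff]; exact fun h => hw h.1
  exact div_ne_zero (hne _ hroot) (zpow_ne_zero _ hroot)

/-- holomorphic endomorphisms of `ℂ∖{0}` semi-equivariant under `μ_N` with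
character `ζ ↦ ζ^m` are exactly the maps `z ↦ z^m · g(z^N)` with `g` holomorphic and
nonvanishing on `ℂ∖{0}`. -/
theorem stmt_12 (N : ℕ) (hN : 1 ≤ N) (m : ℤ) :
    (∀ ψ : ℂ → ℂ,
      (∀ z : ℂ, z ≠ 0 → DifferentiableAt ℂ ψ z) →
      (∀ z : ℂ, z ≠ 0 → ψ z ≠ 0) →
      (∀ ζ : ℂ, ζ ^ N = 1 → ∀ z : ℂ, z ≠ 0 → ψ (ζ * z) = ζ ^ m * ψ z) →
      ∃ g : ℂ → ℂ,
        (∀ w : ℂ, w ≠ 0 → DifferentiableAt ℂ g w) ∧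
        (∀ w : ℂ, w ≠ 0 → g w ≠ 0) ∧
        ∀ z : ℂ, z ≠ 0 → ψ z = z ^ m * g (z ^ N)) ∧
    (∀ g : ℂ → ℂ,
      (∀ w : ℂ, w ≠ 0 → DifferentiableAt ℂ g w) →
      (∀ w : ℂ, w ≠ 0 → g w ≠ 0) →
      ∀ ζ : ℂ, ζ ^ N = 1 → ∀ z : ℂ, z ≠ 0 →
        (ζ * z) ^ m * g ((ζ * z) ^ N) = ζ ^ m * (z ^ m * g (z ^ N))) := by
  have hN0 : N ≠ 0 := Nat.one_le_iff_ne_zero.mp hN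
  refine ⟨fun ψ hdiff hne hψ => ?_, fun g _ _ ζ hζ z _ => ?_⟩
  · exact ⟨descentAlongPow N m ψ, fun w => differentiableAt_descentAlongPow hψ hN0 hdiff,
      fun w => descentAlongPow_ne_zero hne, fun z => eq_zpow_mul_descentAlongPow hψ hN0⟩
  · rw [mul_pow, hζ, one_mul, mul_zpow, mul_assoc]
end

section
/- Let q ∈ ℂ with q ≠ 0 and |q| ≠ 1, and let n ∈ ℤ. Let P, Q ∈ ℂ[X] be nonzero coprime polynomials satisfying the polynomial identity P(q·X)·Q(X) = q^n·Q(q·X)·P(X), where P(q·X) denotes the composition of P with the polynomial q·X and q^n is the integer power. Then P and Q have no zeros in ℂ∖{0}, and there exists c ∈ ℂ with c ≠ 0 such that P(z)/Q(z) = c·z^n for every z ≠ 0. -/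
/-!
Evaluating the identity at `w` gives `P(qw) Q(w) = qⁿ Q(qw) P(w)`. Since `P` and `Q` have no
common root, a root `w` of `P` forces `P(qw) = 0`, and likewise for `Q`. A nonzero root would
thus generate the infinite orbit `qᵏ w` (infinite because `‖q‖ ≠ 1`), so `P` and `Q` are
monomials `p Xˢ` and `r Xᵗ`; evaluating the identity at `1` then gives `qˢ = qⁿ⁺ᵗ`, i.e.
`s = n + t`.
-/

open Polynomial

section NormedField

variable {K : Type*} [NormedField K] {q : K}

theorem zpow_right_injective_of_norm_ne_one (hq0 : q ≠ 0) (hq1 : ‖q‖ ≠ 1) :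
    Function.Injective fun n : ℤ ↦ q ^ n := fun a b h ↦
  zpow_right_injective₀ (norm_pos_iff.mpr hq0) hq1 <| by
    simpa only [norm_zpow] using congrArg norm h

theorem Polynomial.eq_zero_of_isRoot_of_forall_isRoot_mul (hq0 : q ≠ 0) (hq1 : ‖q‖ ≠ 1)
    {R : K[X]} {z : K} (hz : z ≠ 0) (hRz : R.IsRoot z)
    (hR : ∀ w, R.IsRoot w → R.IsRoot (q * w)) : R = 0 := by
  have horbit : ∀ k : ℕ, R.IsRoot (q ^ k * z) := by
    intro k
    induction k with
    | zero => simpa using hRz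
    | succ k ih => simpa only [pow_succ', mul_assoc] using hR _ ih
  have hinj : Function.Injective fun k : ℕ ↦ q ^ k * z := fun i j h ↦ by
    have hij : q ^ (i : ℤ) = q ^ (j : ℤ) := by exact_mod_cast mul_right_cancel₀ hz h
    exact_mod_cast zpow_right_injective_of_norm_ne_one hq0 hq1 hij
  exact eq_zero_of_infinite_isRoot R (Set.infinite_of_injective_forall_mem hinj horbit)

end NormedField

section Field

variable {K : Type*} [Field K]

theorem Polynomial.isRoot_mul_of_isCoprime {P Q : K[X]} {q a : K} (hcop : IsCoprime P Q)
    (h : ∀ w, P.eval (q * w) * Q.eval w = a * Q.eval (q * w) * P.eval w)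
    {w : K} (hw : P.IsRoot w) : P.IsRoot (q * w) := by
  have hQw : Q.eval w ≠ 0 := by
    simpa [hw.eq_zero] using aeval_ne_zero_of_isCoprime hcop w
  simpa [hw.eq_zero, hQw] using h w

theorem Polynomial.eq_C_mul_X_pow_of_splits {R : K[X]} (hR : Splits R)
    (h : ∀ z, z ≠ 0 → R.eval z ≠ 0) : R = C R.leadingCoeff * X ^ R.natDegree := by
  have hroots : R.roots = Multiset.replicate R.natDegree 0 := by
    refine Multiset.eq_replicate.mpr ⟨hR.natDegree_eq_card_roots.symm, fun b hb ↦ ?_⟩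
    by_contra hb0
    exact h b hb0 (isRoot_of_mem_roots hb)
  conv_lhs => rw [hR.eq_prod_roots, hroots]
  simp

end Field

/-- a rational map satisfying `R(qz) = qⁿ R(z)` for `|q| ≠ 1` has all its
zeros and poles in `{0, ∞}` and equals `c·zⁿ` on `ℂ∖{0}`. -/
theorem stmt_16 (q : ℂ) (hq0 : q ≠ 0) (hq1 : ‖q‖ ≠ 1) (n : ℤ)
    (P Q : Polynomial ℂ) (hP : P ≠ 0) (hQ : Q ≠ 0) (hcop : IsCoprime P Q)
    (heq : P.comp (Polynomial.C q * Polynomial.X) * Q =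
      Polynomial.C (q ^ n) * (Q.comp (Polynomial.C q * Polynomial.X)) * P) :
    (∀ z : ℂ, z ≠ 0 → P.eval z ≠ 0) ∧ (∀ z : ℂ, z ≠ 0 → Q.eval z ≠ 0) ∧
      ∃ c : ℂ, c ≠ 0 ∧ ∀ z : ℂ, z ≠ 0 → P.eval z / Q.eval z = c * z ^ n := by
  have hPQ : ∀ w, P.eval (q * w) * Q.eval w = q ^ n * Q.eval (q * w) * P.eval w := fun w ↦ by
    simpa [eval_comp] using congrArg (eval w) heq
  have hQP : ∀ w, Q.eval (q * w) * P.eval w = (q ^ n)⁻¹ * P.eval (q * w) * Q.eval w :=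
    fun w ↦ by
      rw [mul_assoc, hPQ, mul_assoc, inv_mul_cancel_left₀ (zpow_ne_zero n hq0)]
  have hPz : ∀ z : ℂ, z ≠ 0 → P.eval z ≠ 0 := fun z hz hPz ↦
    hP <| eq_zero_of_isRoot_of_forall_isRoot_mul hq0 hq1 hz hPz fun _ ↦
      isRoot_mul_of_isCoprime hcop hPQ
  have hQz : ∀ z : ℂ, z ≠ 0 → Q.eval z ≠ 0 := fun z hz hQz ↦
    hQ <| eq_zero_of_isRoot_of_forall_isRoot_mul hq0 hq1 hz hQz fun _ ↦
      isRoot_mul_of_isCoprime hcop.symm hQP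
  have hPX := eq_C_mul_X_pow_of_splits (IsAlgClosed.splits P) hPz
  have hQX := eq_C_mul_X_pow_of_splits (IsAlgClosed.splits Q) hQz
  have hp := leadingCoeff_ne_zero.mpr hP
  have hr := leadingCoeff_ne_zero.mpr hQ
  set p := P.leadingCoeff
  set r := Q.leadingCoeff
  have hdeg : (P.natDegree : ℤ) = n + Q.natDegree := by
    apply zpow_right_injective_of_norm_ne_one hq0 hq1
    have h1 := hPQ 1
    rw [hPX, hQX] at h1
    simp only [eval_mul, eval_pow, eval_C, eval_X, mul_one, one_pow] at h1
    refine mul_right_cancel₀ (mul_ne_zero hp hr) ?_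
    simp only [zpow_add₀ hq0, zpow_natCast]
    linear_combination h1
  refine ⟨hPz, hQz, p / r, div_ne_zero hp hr, fun z hz ↦ ?_⟩
  rw [hPX, hQX]
  simp only [eval_mul, eval_pow, eval_C, eval_X, ← zpow_natCast, hdeg, zpow_add₀ hz]
  field_simp
end

section
/- Let N ≥ 1 be an integer and m ∈ ℤ. Let A, B ∈ ℂ[X] be nonzero coprime polynomials such that for every ζ ∈ ℂ with ζ^N = 1 the polynomial identity A(ζ·X)·B(X) = ζ^m·B(ζ·X)·A(X) holds, where A(ζ·X) denotes the composition of A with the polynomial ζ·X and ζ^m is the integer power. Then there exist polynomials P, Q ∈ ℂ[X] with Q ≠ 0 such that for every z ≠ 0 with B(z) ≠ 0 and Q(z^N) ≠ 0 one has A(z)/B(z) = z^m·P(z^N)/Q(z^N). -/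
/-!
Let `e` be a primitive `N`-th root of unity. Coprimality turns the identity at `ζ = e` into
`A ∣ A(eX)` and `B ∣ B(eX)`; as these have equal degrees, `A(eX) = e^a A` and `B(eX) = e^b B`,
where `a`, `b` are the trailing degrees. Comparing coefficients, every monomial of `A` has degree
`≡ a (mod N)`, so `A = X^a P(X^N)`, and likewise `B = X^b Q(X^N)`. Cancelling `A B` in the identity
leaves `e^a = e^m e^b`, i.e. `N ∣ a - b - m`, and the excess power of `X^N` goes into `P` or `Q`.
-/

open Polynomial

namespace Polynomial

theorem exists_eq_X_pow_mul_expand {R : Type*} [CommSemiring R] {p : R[X]} {N r : ℕ}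
    (hN : N ≠ 0) (h : ∀ k ∈ p.support, r ≤ k ∧ N ∣ k - r) :
    ∃ q, p = X ^ r * expand R N q := by
  obtain ⟨p', rfl⟩ : X ^ r ∣ p :=
    X_pow_dvd_iff.mpr fun d hd => notMem_support_iff.mp fun hmem => (h d hmem).1.not_gt hd
  refine ⟨contract N p', congrArg _ (ext fun n => ?_)⟩
  rw [coeff_expand (Nat.pos_of_ne_zero hN), coeff_contract hN]
  split_ifs with hn
  · rw [Nat.div_mul_cancel hn]
  · by_contra hne
    have hmem : n + r ∈ (X ^ r * p').support := by
      rwa [mem_support_iff, coeff_X_pow_mul', if_pos (Nat.le_add_left r n), Nat.add_sub_cancel]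
    exact hn (by simpa using (h _ hmem).2)

section Field

variable {K : Type*} [Field K] {p : K[X]} {e : K}

theorem comp_C_mul_X_eq_C_pow_natTrailingDegree_mul (hp : p ≠ 0) (he : e ≠ 0)
    (h : p ∣ p.comp (C e * X)) : p.comp (C e * X) = C (e ^ p.natTrailingDegree) * p := by
  have hcomp : p.comp (C e * X) ≠ 0 :=
    (comp_C_mul_X_eq_zero_iff (mem_nonZeroDivisors_of_ne_zero he)).not.mpr hp
  obtain ⟨u, hu⟩ := associated_of_dvd_of_natDegree_le h hcomp
    (by rw [natDegree_comp, natDegree_C_mul_X _ he, mul_one])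
  obtain ⟨c, -, hc⟩ := Polynomial.isUnit_iff.mp u.isUnit
  have hpc : p.comp (C e * X) = C c * p := by rw [← hu, ← hc, mul_comm]
  have hcoeff := congrArg (coeff · p.natTrailingDegree) hpc
  simp only [comp_C_mul_X_coeff, coeff_C_mul] at hcoeff
  rw [hpc, mul_left_cancel₀ (mem_support_iff.mp (natTrailingDegree_mem_support_of_nonzero hp))
    (by rw [hcoeff, mul_comm] : p.coeff _ * e ^ _ = p.coeff _ * c)]

theorem exists_eq_X_pow_natTrailingDegree_mul_expand {N : ℕ} (he : IsPrimitiveRoot e N)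
    (hN : N ≠ 0) (h : p.comp (C e * X) = C (e ^ p.natTrailingDegree) * p) :
    ∃ q, p = X ^ p.natTrailingDegree * expand K N q := by
  refine exists_eq_X_pow_mul_expand hN fun k hk => ⟨natTrailingDegree_le_of_mem_supp k hk, ?_⟩
  have hcoeff := congrArg (coeff · k) h
  simp only [comp_C_mul_X_coeff, coeff_C_mul] at hcoeff
  have hpow : e ^ k = e ^ p.natTrailingDegree :=
    mul_left_cancel₀ (mem_support_iff.mp hk) (by rw [hcoeff, mul_comm])
  have he0 : e ≠ 0 := he.ne_zero hN
  rw [← he.pow_eq_one_iff_dvd, pow_sub₀ e he0 (natTrailingDegree_le_of_mem_supp k hk), hpow,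
    mul_inv_cancel₀ (pow_ne_zero _ he0)]

theorem eval_div_eq_zpow_mul_eval_div {A B P Q : K[X]} {N a b : ℕ} {m t : ℤ}
    (hA : A = X ^ a * expand K N P) (hB : B = X ^ b * expand K N Q)
    (ht : (a : ℤ) - b - m = N * t) {z : K} (hz : z ≠ 0) :
    A.eval z / B.eval z =
      z ^ m * ((X ^ t.toNat * P).eval (z ^ N) / (X ^ (-t).toNat * Q).eval (z ^ N)) := by
  have hzN : z ^ N ≠ 0 := pow_ne_zero _ hz
  calc A.eval z / B.eval z = z ^ ((a : ℤ) - b) * (P.eval (z ^ N) / Q.eval (z ^ N)) := by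
        simp only [hA, hB, eval_mul, eval_pow, eval_X, expand_eval, zpow_sub₀ hz, zpow_natCast,
          mul_div_mul_comm]
    _ = z ^ m * ((z ^ N) ^ t * (P.eval (z ^ N) / Q.eval (z ^ N))) := by
        rw [show (a : ℤ) - b = m + N * t by omega, zpow_add₀ hz, zpow_mul, zpow_natCast, mul_assoc]
    _ = _ := by
        simp only [eval_mul, eval_pow, eval_X, mul_div_mul_comm]
        rw [← zpow_natCast (z ^ N) t.toNat, ← zpow_natCast (z ^ N) (-t).toNat, ← zpow_sub₀ hzN,
          Int.toNat_sub_toNat_neg]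

end Field

end Polynomial

/-- a rational map semi-equivariant under `μ_N` with character `ζ ↦ ζ^m`
is of the form `z^m · P(z^N)/Q(z^N)`. -/
theorem stmt_17 (N : ℕ) (hN : 1 ≤ N) (m : ℤ)
    (A B : Polynomial ℂ) (hA : A ≠ 0) (hB : B ≠ 0) (hcop : IsCoprime A B)
    (heq : ∀ ζ : ℂ, ζ ^ N = 1 →
      A.comp (Polynomial.C ζ * Polynomial.X) * B =
        Polynomial.C (ζ ^ m) * (B.comp (Polynomial.C ζ * Polynomial.X)) * A) :
    ∃ P Q : Polynomial ℂ, Q ≠ 0 ∧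
      ∀ z : ℂ, z ≠ 0 → B.eval z ≠ 0 → Q.eval (z ^ N) ≠ 0 →
        A.eval z / B.eval z = z ^ m * (P.eval (z ^ N) / Q.eval (z ^ N)) := by
  have hN0 : N ≠ 0 := by omega
  obtain ⟨e, he⟩ : ∃ e : ℂ, IsPrimitiveRoot e N := ⟨_, Complex.isPrimitiveRoot_exp N hN0⟩
  have he0 : e ≠ 0 := he.ne_zero hN0
  have hAB := heq e he.pow_eq_one
  have hAdvd : A ∣ A.comp (C e * X) :=
    hcop.dvd_of_dvd_mul_right ⟨C (e ^ m) * B.comp (C e * X), by linear_combination hAB⟩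
  have hBdvd : B ∣ B.comp (C e * X) :=
    (isUnit_C.mpr (zpow_ne_zero m he0).isUnit).dvd_mul_left.mp
      (hcop.symm.dvd_of_dvd_mul_right ⟨A.comp (C e * X), by linear_combination -hAB⟩)
  have hAe := comp_C_mul_X_eq_C_pow_natTrailingDegree_mul hA he0 hAdvd
  have hBe := comp_C_mul_X_eq_C_pow_natTrailingDegree_mul hB he0 hBdvd
  obtain ⟨PA, hPA⟩ := exists_eq_X_pow_natTrailingDegree_mul_expand he hN0 hAe
  obtain ⟨PB, hPB⟩ := exists_eq_X_pow_natTrailingDegree_mul_expand he hN0 hBe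
  have hpow : e ^ A.natTrailingDegree = e ^ m * e ^ B.natTrailingDegree := by
    rw [hAe, hBe] at hAB
    refine C_injective (mul_right_cancel₀ (mul_ne_zero hA hB) ?_)
    rw [C_mul]
    linear_combination hAB
  obtain ⟨t, ht⟩ : (N : ℤ) ∣ (A.natTrailingDegree : ℤ) - B.natTrailingDegree - m := by
    rw [← he.zpow_eq_one_iff_dvd, zpow_sub₀ he0, zpow_sub₀ he0, zpow_natCast, zpow_natCast, hpow,
      mul_div_cancel_right₀ _ (pow_ne_zero _ he0), div_self (zpow_ne_zero m he0)]
  refine ⟨X ^ t.toNat * PA, X ^ (-t).toNat * PB, ?_, fun z hz _ _ =>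
    eval_div_eq_zpow_mul_eval_div hPA hPB ht hz⟩
  rintro hQ
  exact hB (by rw [hPB, (mul_eq_zero.mp hQ).resolve_left (pow_ne_zero _ X_ne_zero), map_zero,
    mul_zero])
end

section
/- Let v = (v₁, v₂) ∈ ℝ² with v ≠ 0, and let π : ℝ² → (ℝ⧸ℤ) × (ℝ⧸ℤ) be the componentwise quotient homomorphism onto the two-torus. If v₁ and v₂ are linearly independent over ℚ, then the image π({t·v : t ∈ ℝ}) is dense in the torus. If v₁ and v₂ are linearly dependent over ℚ, then π({t·v : t ∈ ℝ}) is a closed (indeed compact) subset of the torus. -/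
/-!
The line `t ↦ t • v` is an additive homomorphism `ℝ → (ℝ ⧸ ℤ)²`. If `v₁, v₂` are ℚ-dependent,
some `T ≠ 0` makes `T • v` an integer vector, so the line is `T`-periodic and its image is the
continuous image of `[0, T]`. If they are independent, then `v₂ ≠ 0` and `α = v₁ / v₂` is
irrational; moving along the line by `n / v₂` shifts the first coordinate by `n • α` and fixes
the second, and the multiples of an irrational are dense in the circle, so the closure of the
image contains every horizontal circle.
-/

open Function Set

section DenseProd

variable {G H : Type*} [TopologicalSpace G] [AddGroup G] [ContinuousAdd G] [TopologicalSpace H]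

theorem dense_of_forall_fst_add_mem {S : Set (G × H)} {D : Set G} (hD : Dense D)
    (hS : ∀ p ∈ S, ∀ d ∈ D, (p.1 + d, p.2) ∈ S) (hsnd : ∀ b, ∃ a, (a, b) ∈ S) : Dense S := by
  rintro ⟨a, b⟩
  obtain ⟨c, hc⟩ := hsnd b
  let g : G → G × H := fun y => (c + y, b)
  have hg : Continuous g := (continuous_const.add continuous_id).prodMk continuous_const
  have hgD : g '' D ⊆ S := by
    rintro _ ⟨d, hd, rfl⟩
    exact hS _ hc d hd
  have hmem : g (-c + a) ∈ g '' closure D := mem_image_of_mem g (hD (-c + a))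
  simpa [g] using closure_mono hgD (image_closure_subset_closure_image hg hmem)

end DenseProd

theorem exists_int_relation_of_rat_relation {v₁ v₂ : ℝ} {s t : ℚ} (hst : ¬(s = 0 ∧ t = 0))
    (h : (s : ℝ) * v₁ + (t : ℝ) * v₂ = 0) :
    ∃ m n : ℤ, ¬(m = 0 ∧ n = 0) ∧ (m : ℝ) * v₁ + (n : ℝ) * v₂ = 0 := by
  refine ⟨s.num * t.den, t.num * s.den, by simpa using hst, ?_⟩
  have hs : (s.num : ℝ) = s * s.den := by exact_mod_cast (Rat.mul_den_eq_num s).symm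
  have ht : (t.num : ℝ) = t * t.den := by exact_mod_cast (Rat.mul_den_eq_num t).symm
  push_cast
  rw [hs, ht]
  linear_combination ((s.den : ℝ) * t.den) * h

theorem exists_ne_zero_mul_eq_int {v₁ v₂ : ℝ} (hv : (v₁, v₂) ≠ (0, 0)) {m n : ℤ}
    (hmn : ¬(m = 0 ∧ n = 0)) (h : (m : ℝ) * v₁ + (n : ℝ) * v₂ = 0) :
    ∃ T ≠ 0, ∃ k l : ℤ, T * v₁ = k ∧ T * v₂ = l := by
  by_cases hv₁ : v₁ = 0
  · have hv₂ : v₂ ≠ 0 := fun hv₂ => hv (by simp [hv₁, hv₂])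
    exact ⟨1 / v₂, by simpa using hv₂, 0, 1, by simp [hv₁], by field_simp; norm_num⟩
  · have hn : n ≠ 0 := by
      rintro rfl
      have hm : m ≠ 0 := fun hm => hmn ⟨hm, rfl⟩
      simp_all
    refine ⟨n / v₁, div_ne_zero (by exact_mod_cast hn) hv₁, n, -m, by field_simp, ?_⟩
    push_cast
    field_simp
    linarith

noncomputable def torusLine (v₁ v₂ : ℝ) : ℝ →+ AddCircle (1 : ℝ) × AddCircle (1 : ℝ) :=
  AddMonoidHom.mk'
    (fun t => (((t * v₁ : ℝ) : AddCircle (1 : ℝ)), ((t * v₂ : ℝ) : AddCircle (1 : ℝ))))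
    fun x y => by simp only [add_mul, AddCircle.coe_add, Prod.mk_add_mk]

namespace torusLine

variable (v₁ v₂ : ℝ)

theorem continuous : Continuous (torusLine v₁ v₂) :=
  ((AddCircle.continuous_mk' 1).comp (continuous_mul_const v₁)).prodMk
    ((AddCircle.continuous_mk' 1).comp (continuous_mul_const v₂))

theorem periodic {T : ℝ} {k l : ℤ} (hk : T * v₁ = k) (hl : T * v₂ = l) :
    Periodic (torusLine v₁ v₂) T := fun x => by
  have hT : torusLine v₁ v₂ T = 0 := by simp [torusLine, hk, hl]
  rw [map_add, hT, add_zero]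

theorem isCompact_range (hv : (v₁, v₂) ≠ (0, 0)) {s t : ℚ} (hst : ¬(s = 0 ∧ t = 0))
    (h : (s : ℝ) * v₁ + (t : ℝ) * v₂ = 0) : IsCompact (range (torusLine v₁ v₂)) := by
  obtain ⟨m, n, hmn, hrel⟩ := exists_int_relation_of_rat_relation hst h
  obtain ⟨T, hT, k, l, hk, hl⟩ := exists_ne_zero_mul_eq_int hv hmn hrel
  exact (periodic v₁ v₂ hk hl).compact_of_continuous hT (continuous v₁ v₂)

theorem add_intCast_div (hv₂ : v₂ ≠ 0) (t : ℝ) (n : ℤ) :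
    torusLine v₁ v₂ (t + n / v₂) =
      ((torusLine v₁ v₂ t).1 + n • ((v₁ / v₂ : ℝ) : AddCircle (1 : ℝ)), (torusLine v₁ v₂ t).2) := by
  have hn : torusLine v₁ v₂ (n / v₂) = (n • ((v₁ / v₂ : ℝ) : AddCircle (1 : ℝ)), 0) := by
    have h₁ : (n / v₂ : ℝ) * v₁ = n • (v₁ / v₂) := by rw [zsmul_eq_mul]; ring
    have h₂ : (n / v₂ : ℝ) * v₂ = n := div_mul_cancel₀ _ hv₂
    simp [torusLine, h₁, h₂]
  rw [map_add, hn]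
  exact Prod.ext rfl (add_zero _)

theorem dense_range (hv₂ : v₂ ≠ 0) (hα : Irrational (v₁ / v₂)) :
    Dense (range (torusLine v₁ v₂)) := by
  have hD : DenseRange (· • ((v₁ / v₂ : ℝ) : AddCircle (1 : ℝ)) : ℤ → AddCircle (1 : ℝ)) :=
    AddCircle.denseRange_zsmul_coe_iff.2 (by simpa using hα)
  refine dense_of_forall_fst_add_mem hD ?_ fun b => ?_
  · rintro _ ⟨t, rfl⟩ _ ⟨n, rfl⟩
    exact ⟨t + n / v₂, add_intCast_div v₁ v₂ hv₂ t n⟩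
  · obtain ⟨x, rfl⟩ := QuotientAddGroup.mk_surjective b
    exact ⟨((x / v₂ * v₁ : ℝ) : AddCircle (1 : ℝ)), x / v₂,
      by simp [torusLine, div_mul_cancel₀ x hv₂]⟩

end torusLine

/-- the Kronecker dichotomy on the two-torus: the image of the line
`t ↦ t·(v₁, v₂)` is dense if `v₁, v₂` are ℚ-linearly independent, and closed (indeed
compact) if they are ℚ-linearly dependent. -/
theorem stmt_18 (v₁ v₂ : ℝ) (hv : (v₁, v₂) ≠ (0, 0)) :
    ((∀ s t : ℚ, (s : ℝ) * v₁ + (t : ℝ) * v₂ = 0 → s = 0 ∧ t = 0) →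
      Dense (Set.range fun t : ℝ =>
        (((t * v₁ : ℝ) : AddCircle (1 : ℝ)), ((t * v₂ : ℝ) : AddCircle (1 : ℝ))))) ∧
    ((∃ s t : ℚ, ¬(s = 0 ∧ t = 0) ∧ (s : ℝ) * v₁ + (t : ℝ) * v₂ = 0) →
      IsClosed (Set.range fun t : ℝ =>
        (((t * v₁ : ℝ) : AddCircle (1 : ℝ)), ((t * v₂ : ℝ) : AddCircle (1 : ℝ)))) ∧
      IsCompact (Set.range fun t : ℝ =>
        (((t * v₁ : ℝ) : AddCircle (1 : ℝ)), ((t * v₂ : ℝ) : AddCircle (1 : ℝ))))) := by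
  refine ⟨fun hind => ?_, fun ⟨s, t, hst, h⟩ => ?_⟩
  · have hv₂ : v₂ ≠ 0 := fun hv₂ => by simpa using hind 0 1 (by simp [hv₂])
    have hα : Irrational (v₁ / v₂) := by
      rintro ⟨q, hq⟩
      refine absurd (hind 1 (-q) ?_).1 one_ne_zero
      push_cast
      rw [hq]
      field_simp
      ring
    exact torusLine.dense_range v₁ v₂ hv₂ hα
  · have hK := torusLine.isCompact_range v₁ v₂ hv hst h
    exact ⟨hK.isClosed, hK⟩
end
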